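/- arXiv:2411.15547 — 9 statements merged into one kernel-verified Lean document; each statement's English description precedes it below -/
import Mathlib

section
/- For every integer n ≥ 2 and every palindromic automorphism α of F_n, each row of the abelianization matrix ψ(α) contains exactly n−1 even entries (equivalently, exactly one odd entry). -/
/-- A (reduced) word in the free group is palindromic if it equals its own reverse. -/
def IsPalindromeWord {n : ℕ} (w : FreeGroup (Fin n)) : Prop :=
  w.toWord.reverse = w.toWord

/-- An automorphism of the free group `F_n` is palindromic if it sends each generator
to a palindromic word. -/
def IsPalindromicAut {n : ℕ} (α : MulAut (FreeGroup (Fin n))) : Prop :=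
  ∀ i : Fin n, IsPalindromeWord (α (FreeGroup.of i))

/-- The exponent sum of the generator `a_j` in the word `w`. -/
noncomputable def expSum {n : ℕ} (j : Fin n) (w : FreeGroup (Fin n)) : ℤ :=
  Multiplicative.toAdd
    ((FreeGroup.lift fun k => Multiplicative.ofAdd (if k = j then (1 : ℤ) else 0)) w)

/-- The abelianization matrix `ψ(α)`: its `(i,j)` entry is the exponent sum of `a_j`
in `α(a_i)`. -/
noncomputable def psiMat {n : ℕ} (α : MulAut (FreeGroup (Fin n))) :
    Matrix (Fin n) (Fin n) ℤ :=
  Matrix.of fun i j => expSum j (α (FreeGroup.of i))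

namespace PalAux

variable {n : ℕ}

lemma expSum_one (j : Fin n) : expSum j 1 = 0 := by simp [expSum]

lemma expSum_mul (j : Fin n) (u v : FreeGroup (Fin n)) :
    expSum j (u * v) = expSum j u + expSum j v := by
  simp [expSum]

lemma expSum_inv (j : Fin n) (u : FreeGroup (Fin n)) :
    expSum j u⁻¹ = - expSum j u := by
  simp [expSum]

lemma expSum_of (j i : Fin n) :
    expSum j (FreeGroup.of i) = if i = j then 1 else 0 := by
  simp [expSum, FreeGroup.lift_apply_of]

/-- Decompose any hom to `Multiplicative ℤ` along exponent sums. -/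
lemma hom_eq_sum (φ : FreeGroup (Fin n) →* Multiplicative ℤ) (w : FreeGroup (Fin n)) :
    Multiplicative.toAdd (φ w)
      = ∑ k, expSum k w * Multiplicative.toAdd (φ (FreeGroup.of k)) := by
  induction w using FreeGroup.induction_on with
  | C1 => simp [expSum_one]
  | of x =>
      simp [expSum_of, ite_mul]
  | inv_of x ih => simp only [map_inv, toAdd_inv, expSum_inv, ih, neg_mul, Finset.sum_neg_distrib]
  | mul u v ihu ihv =>
      simp only [map_mul, toAdd_mul, expSum_mul, add_mul, Finset.sum_add_distrib, ihu, ihv]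

lemma psiMat_mul (α β : MulAut (FreeGroup (Fin n))) :
    psiMat (α * β) = psiMat β * psiMat α := by
  ext i j
  have h := hom_eq_sum ((FreeGroup.lift fun k =>
      Multiplicative.ofAdd (if k = j then (1 : ℤ) else 0)).comp α.toMonoidHom)
      (β (FreeGroup.of i))
  simpa [psiMat, expSum, Matrix.mul_apply] using h

lemma psiMat_one : (psiMat (1 : MulAut (FreeGroup (Fin n)))) = 1 := by
  ext i j
  simp [psiMat, expSum_of, Matrix.one_apply, eq_comm]

lemma odd_mid {a s : ℤ} (h : Odd (a + (s + a))) : Odd s := by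
  rcases h with ⟨m, hm⟩; exact ⟨m - a, by linarith⟩

/-- Parity of the letter-count sums of a palindrome: at most one odd entry. -/
lemma pal_odd_unique {L : List (Fin n × Bool)} (hL : L.Palindrome) (j k : Fin n)
    (hj : Odd ((L.map fun p => if p.1 = j then (if p.2 then (1:ℤ) else -1) else 0).sum))
    (hk : Odd ((L.map fun p => if p.1 = k then (if p.2 then (1:ℤ) else -1) else 0).sum)) :
    j = k := by
  induction hL with
  | nil => simp at hj
  | singleton x =>
      simp only [List.map_cons, List.map_nil, List.sum_cons, List.sum_nil, add_zero] at hj hk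
      by_cases h1 : x.1 = j
      · by_cases h2 : x.1 = k
        · exact h1 ▸ h2
        · simp [h2] at hk
      · simp [h1] at hj
  | cons_concat x _ ih =>
      simp only [List.map_cons, List.map_append, List.sum_cons, List.sum_append,
        List.map_nil, List.sum_nil, add_zero] at hj hk
      exact ih (odd_mid hj) (odd_mid hk)

lemma expSum_mk (j : Fin n) (L : List (Fin n × Bool)) :
    expSum j (FreeGroup.mk L)
      = (L.map fun p => if p.1 = j then (if p.2 then (1:ℤ) else -1) else 0).sum := by
  induction L with
  | nil => simpa [← FreeGroup.one_eq_mk] using expSum_one j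
  | cons p L ih =>
      have : FreeGroup.mk (p :: L) = FreeGroup.mk [p] * FreeGroup.mk L := by
        rw [FreeGroup.mul_mk]; rfl
      rw [this, expSum_mul, ih]
      rcases p with ⟨a, b⟩
      cases b
      · have h1 : FreeGroup.mk [(a, false)] = (FreeGroup.of a)⁻¹ := by
          rw [show FreeGroup.of a = FreeGroup.mk [(a, true)] from rfl, FreeGroup.inv_mk]; rfl
        rw [h1, expSum_inv, expSum_of]
        by_cases h : a = j <;> simp [h]
      · have h1 : FreeGroup.mk [(a, true)] = FreeGroup.of a := rfl
        rw [h1, expSum_of]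
        by_cases h : a = j <;> simp [h]

end PalAux

/-- for `n ≥ 2` and `α` a palindromic automorphism of `F_n`, each row of
`ψ(α)` contains exactly `n - 1` even entries. -/


theorem each_row_of_abelianization_of_palindromic_aut_has_n_sub_one_even_entries
    (n : ℕ) (hn : 2 ≤ n) (α : MulAut (FreeGroup (Fin n))) (hα : IsPalindromicAut α)
    (i : Fin n) :
    (Finset.univ.filter fun j => Even (psiMat α i j)).card = n - 1 := by
  classical
  set w := α (FreeGroup.of i) with hw
  have hpal : (w.toWord).Palindrome := List.Palindrome.of_reverse_eq (hα i)
  -- entries in terms of the word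
  have hentry : ∀ j, psiMat α i j
      = ((w.toWord).map fun p => if p.1 = j then (if p.2 then (1:ℤ) else -1) else 0).sum := by
    intro j
    rw [show psiMat α i j = expSum j w from rfl, ← FreeGroup.mk_toWord (x := w),
      PalAux.expSum_mk]
    rw [FreeGroup.mk_toWord]
  -- at most one odd entry
  have hsub : ∀ j k : Fin n, Odd (psiMat α i j) → Odd (psiMat α i k) → j = k := by
    intro j k hj hk
    rw [hentry j] at hj; rw [hentry k] at hk
    exact PalAux.pal_odd_unique hpal j k hj hk
  -- at least one odd entry, via invertibility
  have hone : psiMat α * psiMat α⁻¹ = 1 := by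
    rw [← PalAux.psiMat_mul, inv_mul_cancel, PalAux.psiMat_one]
  have hexists : ∃ j, Odd (psiMat α i j) := by
    by_contra h
    push_neg at h
    have heven : ∀ j, Even (psiMat α i j) := by
      intro j; rcases Int.even_or_odd (psiMat α i j) with he | ho
      · exact he
      · exact absurd ho (h j)
    have h1 : ((1 : Matrix (Fin n) (Fin n) ℤ) i i) = 1 := by simp
    rw [← hone, Matrix.mul_apply] at h1
    have : Even (∑ k, psiMat α i k * psiMat α⁻¹ k i) :=
      Finset.even_sum _ (fun k _ => (heven k).mul_right _)
    rw [h1] at this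
    simp at this
  obtain ⟨j0, hj0⟩ := hexists
  have hodd : (Finset.univ.filter fun j => ¬ Even (psiMat α i j)) = {j0} := by
    apply Finset.eq_singleton_iff_unique_mem.mpr
    constructor
    · simp [Int.not_even_iff_odd, hj0]
    · intro x hx
      simp only [Finset.mem_filter, Finset.mem_univ, true_and, Int.not_even_iff_odd] at hx
      exact hsub x j0 hx hj0
  have hcard := Finset.card_filter_add_card_filter_not
    (s := (Finset.univ : Finset (Fin n))) (p := fun j => Even (psiMat α i j))
  rw [hodd] at hcard
  simp only [Finset.card_singleton, Finset.card_univ, Fintype.card_fin] at hcard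
  omega
end

section
/- For every integer n ≥ 2 and every matrix M ∈ GL_n(ℤ) having exactly n−1 even entries in each row, there exists a palindromic automorphism α of F_n with ψ(α) = M. -/
namespace PalinAux

/-- flip each letter of a free-group element to its inverse. -/
def flipHom (n : ℕ) : FreeGroup (Fin n) →* FreeGroup (Fin n) :=
  FreeGroup.lift fun i => (FreeGroup.of i)⁻¹

def flipb {n : ℕ} : Fin n × Bool → Fin n × Bool := fun p => (p.1, !p.2)

variable {n : ℕ}

lemma flipHom_mk (L : List (Fin n × Bool)) :
    flipHom n (FreeGroup.mk L) = FreeGroup.mk (L.map flipb) := by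
  induction L with
  | nil => simp [← FreeGroup.one_eq_mk]
  | cons p L ih =>
    have h : FreeGroup.mk (p :: L) = FreeGroup.mk [p] * FreeGroup.mk L := by
      rw [FreeGroup.mul_mk]; rfl
    have h' : FreeGroup.mk (flipb p :: L.map flipb)
        = FreeGroup.mk [flipb p] * FreeGroup.mk (L.map flipb) := by
      rw [FreeGroup.mul_mk]; rfl
    rw [h, map_mul, ih, List.map_cons, h']
    congr 1
    obtain ⟨x, b⟩ := p
    have hof : FreeGroup.mk [(x, true)] = FreeGroup.of x := rfl
    have hinv : FreeGroup.mk [(x, false)] = (FreeGroup.of x)⁻¹ := by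
      rw [← hof, FreeGroup.inv_mk]; rfl
    cases b
    · rw [hinv, map_inv]
      show ((flipHom n) (FreeGroup.of x))⁻¹ = _
      rw [flipHom, FreeGroup.lift_apply_of, inv_inv]
      exact hof.symm
    · rw [hof]
      show (flipHom n) (FreeGroup.of x) = _
      rw [flipHom, FreeGroup.lift_apply_of]
      rw [show flipb (x, true) = (x, false) from rfl, hinv]

lemma reduce_map_flipb (L : List (Fin n × Bool)) :
    FreeGroup.reduce (L.map flipb) = (FreeGroup.reduce L).map flipb := by
  induction L with
  | nil => simp
  | cons p L ih =>
    rw [List.map_cons, FreeGroup.reduce.cons, FreeGroup.reduce.cons, ih]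
    cases hred : FreeGroup.reduce L with
    | nil => rfl
    | cons hd tl =>
      simp only [List.map_cons]
      by_cases hc : p.1 = hd.1 ∧ p.2 = !hd.2
      · rw [if_pos hc, if_pos]
        simp [flipb, hc.1, hc.2]
      · rw [if_neg hc, if_neg]
        · rfl
        · simp only [flipb]
          intro hcc
          exact hc ⟨hcc.1, by simpa using hcc.2⟩

lemma toWord_flipHom (w : FreeGroup (Fin n)) :
    (flipHom n w).toWord = w.toWord.map flipb := by
  conv_lhs => rw [← FreeGroup.mk_toWord (x := w)]
  rw [flipHom_mk, FreeGroup.toWord_mk, reduce_map_flipb, FreeGroup.reduce_toWord]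

/-- reversal of a free-group element. -/
def revF (w : FreeGroup (Fin n)) : FreeGroup (Fin n) := flipHom n w⁻¹

lemma toWord_revF (w : FreeGroup (Fin n)) :
    (revF w).toWord = w.toWord.reverse := by
  rw [revF, toWord_flipHom, FreeGroup.toWord_inv, FreeGroup.invRev]
  rw [List.map_reverse, List.map_map]
  congr 1
  convert List.map_id _
  ext p : 1
  simp [flipb, Function.comp]

lemma revF_one : revF (1 : FreeGroup (Fin n)) = 1 := by simp [revF]

lemma revF_of (i : Fin n) : revF (FreeGroup.of i) = FreeGroup.of i := by
  simp [revF, flipHom]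

lemma revF_mul (u v : FreeGroup (Fin n)) : revF (u * v) = revF v * revF u := by
  simp [revF, mul_inv_rev]

lemma revF_inv (u : FreeGroup (Fin n)) : revF u⁻¹ = (revF u)⁻¹ := by
  simp [revF]

lemma revF_zpow (u : FreeGroup (Fin n)) (c : ℤ) : revF (u ^ c) = revF u ^ c := by
  simp [revF, ← map_zpow, inv_zpow]

lemma isPalindrome_of_revF {w : FreeGroup (Fin n)} (h : revF w = w) :
    IsPalindromeWord w := by
  unfold IsPalindromeWord
  rw [← toWord_revF, h]



variable {n : ℕ}

lemma expSum_one (j : Fin n) : expSum j (1 : FreeGroup (Fin n)) = 0 := by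
  simp [expSum]

lemma expSum_of (j k : Fin n) :
    expSum j (FreeGroup.of k) = if k = j then 1 else 0 := by
  simp [expSum]

lemma expSum_mul (j : Fin n) (u v : FreeGroup (Fin n)) :
    expSum j (u * v) = expSum j u + expSum j v := by
  simp [expSum]

lemma expSum_inv (j : Fin n) (u : FreeGroup (Fin n)) :
    expSum j u⁻¹ = -expSum j u := by
  simp [expSum]

lemma expSum_zpow (j : Fin n) (u : FreeGroup (Fin n)) (c : ℤ) :
    expSum j (u ^ c) = c * expSum j u := by
  simp [expSum, map_zpow]

lemma psiMat_apply (α : MulAut (FreeGroup (Fin n))) (i j : Fin n) :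
    psiMat α i j = expSum j (α (FreeGroup.of i)) := rfl

lemma expSum_comp (φ : MulAut (FreeGroup (Fin n))) (j : Fin n)
    (w : FreeGroup (Fin n)) :
    expSum j (φ w) = ∑ k, expSum k w * psiMat φ k j := by
  induction w using FreeGroup.induction_on with
  | C1 => simp [expSum_one]
  | of x =>
    show expSum j (φ (FreeGroup.of x)) = ∑ k, expSum k (FreeGroup.of x) * psiMat φ k j
    simp only [expSum_of, ite_mul, one_mul, zero_mul]
    rw [Finset.sum_ite_eq Finset.univ x (fun k => psiMat φ k j)]
    simp [psiMat_apply]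
  | inv_of x ih =>
    show expSum j (φ (FreeGroup.of x)⁻¹) = ∑ k, expSum k (FreeGroup.of x)⁻¹ * psiMat φ k j
    rw [map_inv, expSum_inv]
    rw [show (fun k => expSum k (FreeGroup.of x)⁻¹ * psiMat φ k j)
        = fun k => -(expSum k (FreeGroup.of x) * psiMat φ k j) from
      funext fun k => by rw [expSum_inv]; ring]
    rw [Finset.sum_neg_distrib]
    exact congrArg Neg.neg ih
  | mul u v ihu ihv =>
    rw [map_mul, expSum_mul, ihu, ihv, ← Finset.sum_add_distrib]
    congr 1; funext k; rw [expSum_mul]; ring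


lemma psiMat_one : psiMat (1 : MulAut (FreeGroup (Fin n))) = 1 := by
  ext i j
  show expSum j (FreeGroup.of i) = (1 : Matrix (Fin n) (Fin n) ℤ) i j
  rw [expSum_of, Matrix.one_apply]

lemma psiMat_mul (β α : MulAut (FreeGroup (Fin n))) :
    psiMat (β * α) = psiMat α * psiMat β := by
  ext i j
  show expSum j (β (α (FreeGroup.of i))) = _
  rw [expSum_comp β j (α (FreeGroup.of i)), Matrix.mul_apply]
  rfl

/-- realizable matrices: those of the form `ψ(α)` for a reversal-commuting `α`. -/
def Realiz (n : ℕ) (A : Matrix (Fin n) (Fin n) ℤ) : Prop :=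
  ∃ α : MulAut (FreeGroup (Fin n)), (∀ w, revF (α w) = α (revF w)) ∧ psiMat α = A

lemma realiz_one : Realiz n 1 :=
  ⟨1, fun w => rfl, psiMat_one⟩

lemma realiz_mul {A B : Matrix (Fin n) (Fin n) ℤ} (hA : Realiz n A) (hB : Realiz n B) :
    Realiz n (A * B) := by
  obtain ⟨α, hα, hψα⟩ := hA
  obtain ⟨β, hβ, hψβ⟩ := hB
  refine ⟨β * α, fun w => ?_, by rw [psiMat_mul, hψα, hψβ]⟩
  show revF (β (α w)) = β (α (revF w))
  rw [hβ, hα]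

/-- build an automorphism of the free group from mutually inverse substitutions -/
def mkAut (f g : Fin n → FreeGroup (Fin n))
    (h1 : ∀ i, FreeGroup.lift f (g i) = FreeGroup.of i)
    (h2 : ∀ i, FreeGroup.lift g (f i) = FreeGroup.of i) :
    MulAut (FreeGroup (Fin n)) where
  toFun := FreeGroup.lift f
  invFun := FreeGroup.lift g
  left_inv := by
    have : (FreeGroup.lift g).comp (FreeGroup.lift f)
        = MonoidHom.id (FreeGroup (Fin n)) := by
      apply FreeGroup.ext_hom
      intro a
      simp [h2]
    intro w
    exact DFunLike.congr_fun this w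
  right_inv := by
    have : (FreeGroup.lift f).comp (FreeGroup.lift g)
        = MonoidHom.id (FreeGroup (Fin n)) := by
      apply FreeGroup.ext_hom
      intro a
      simp [h1]
    intro w
    exact DFunLike.congr_fun this w
  map_mul' := map_mul _

lemma mkAut_apply (f g : Fin n → FreeGroup (Fin n)) (h1 h2) (w : FreeGroup (Fin n)) :
    mkAut f g h1 h2 w = FreeGroup.lift f w := rfl

lemma revCommute_of_gen (α : MulAut (FreeGroup (Fin n)))
    (h : ∀ i, revF (α (FreeGroup.of i)) = α (FreeGroup.of i)) :
    ∀ w, revF (α w) = α (revF w) := by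
  intro w
  induction w using FreeGroup.induction_on with
  | C1 => rw [map_one, revF_one, map_one]
  | of x =>
    show revF (α (FreeGroup.of x)) = α (revF (FreeGroup.of x))
    rw [revF_of, h]
  | inv_of x ih =>
    show revF (α (FreeGroup.of x)⁻¹) = α (revF (FreeGroup.of x)⁻¹)
    rw [map_inv, revF_inv, revF_inv, map_inv]
    exact congrArg _ ih
  | mul u v ihu ihv =>
    rw [map_mul, revF_mul, revF_mul, map_mul, ihu, ihv]


section Generators

/-- the permutation matrix of σ (row i = e_{σ i}) -/
def Pmat (σ : Equiv.Perm (Fin n)) : Matrix (Fin n) (Fin n) ℤ :=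
  Matrix.of fun i j => if σ i = j then 1 else 0

/-- diagonal matrix with -1 at i0 -/
def Dmat (i0 : Fin n) : Matrix (Fin n) (Fin n) ℤ :=
  Matrix.diagonal fun k => if k = i0 then -1 else 1

lemma Pmat_mul_apply (σ : Equiv.Perm (Fin n)) (M : Matrix (Fin n) (Fin n) ℤ)
    (i j : Fin n) : (Pmat σ * M) i j = M (σ i) j := by
  simp [Pmat, Matrix.mul_apply, ite_mul, Finset.sum_ite_eq]

lemma Dmat_mul_apply (i0 : Fin n) (M : Matrix (Fin n) (Fin n) ℤ) (i j : Fin n) :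
    (Dmat i0 * M) i j = (if i = i0 then -1 else 1) * M i j := by
  rw [Dmat, Matrix.diagonal_mul]

lemma Dmat_sq (i0 : Fin n) : Dmat i0 * Dmat i0 = 1 := by
  rw [Dmat, Matrix.diagonal_mul_diagonal]
  have h : (fun k => (if k = i0 then (-1:ℤ) else 1) * (if k = i0 then -1 else 1))
      = fun _ => (1:ℤ) := by
    funext k; by_cases h : k = i0 <;> simp [h]
  rw [h, Matrix.diagonal_one]

lemma Pmat_swap_sq (a b : Fin n) :
    Pmat (Equiv.swap a b) * Pmat (Equiv.swap a b) = 1 := by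
  ext i j
  rw [Pmat_mul_apply]
  show (if Equiv.swap a b (Equiv.swap a b i) = j then (1:ℤ) else 0) = _
  rw [Equiv.swap_apply_self, Matrix.one_apply]

/-- realizes a permutation matrix -/
def permAut (σ : Equiv.Perm (Fin n)) : MulAut (FreeGroup (Fin n)) :=
  mkAut (fun i => FreeGroup.of (σ i)) (fun i => FreeGroup.of (σ⁻¹ i))
    (fun i => by simp) (fun i => by simp)

lemma permAut_of (σ : Equiv.Perm (Fin n)) (i : Fin n) :
    permAut σ (FreeGroup.of i) = FreeGroup.of (σ i) := by
  show FreeGroup.lift (fun i => FreeGroup.of (σ i)) (FreeGroup.of i) = _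
  exact FreeGroup.lift_apply_of

lemma realiz_Pmat (σ : Equiv.Perm (Fin n)) : Realiz n (Pmat σ) := by
  refine ⟨permAut σ, revCommute_of_gen _ fun i => ?_, ?_⟩
  · rw [permAut_of, revF_of]
  · ext i j
    rw [psiMat_apply, permAut_of, expSum_of]
    rfl

def invAutF (i0 : Fin n) : MulAut (FreeGroup (Fin n)) :=
  mkAut (fun i => if i = i0 then (FreeGroup.of i)⁻¹ else FreeGroup.of i)
    (fun i => if i = i0 then (FreeGroup.of i)⁻¹ else FreeGroup.of i)
    (fun i => by by_cases h : i = i0 <;> simp [h])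
    (fun i => by by_cases h : i = i0 <;> simp [h])

lemma invAutF_of (i0 i : Fin n) :
    invAutF i0 (FreeGroup.of i)
      = if i = i0 then (FreeGroup.of i)⁻¹ else FreeGroup.of i := by
  show FreeGroup.lift (fun i => if i = i0 then (FreeGroup.of i)⁻¹ else FreeGroup.of i)
    (FreeGroup.of i) = _
  exact FreeGroup.lift_apply_of

lemma realiz_Dmat (i0 : Fin n) : Realiz n (Dmat i0) := by
  refine ⟨invAutF i0, revCommute_of_gen _ fun i => ?_, ?_⟩
  · rw [invAutF_of]
    by_cases h : i = i0 <;> simp [h, revF_of, revF_inv]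
  · ext i j
    rw [psiMat_apply, invAutF_of]
    rw [show Dmat i0 i j = (if i = i0 then -1 else 1) * (if i = j then 1 else 0) by
      rw [Dmat, Matrix.diagonal_apply]; split_ifs <;> simp_all]
    by_cases h : i = i0
    · rw [h, if_pos rfl, if_pos rfl, expSum_inv, expSum_of]
      ring
    · simp [h, expSum_of]

def transAut (i0 j0 : Fin n) (c : ℤ) (hij : i0 ≠ j0) : MulAut (FreeGroup (Fin n)) :=
  mkAut
    (fun i => if i = i0 then FreeGroup.of j0 ^ c * FreeGroup.of i0 * FreeGroup.of j0 ^ c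
      else FreeGroup.of i)
    (fun i => if i = i0 then FreeGroup.of j0 ^ (-c) * FreeGroup.of i0 * FreeGroup.of j0 ^ (-c)
      else FreeGroup.of i)
    (fun i => by
      by_cases h : i = i0
      · rw [if_pos h, h, _root_.map_mul, _root_.map_mul, map_zpow, FreeGroup.lift_apply_of,
          FreeGroup.lift_apply_of, if_neg (Ne.symm hij), if_pos rfl]
        group
      · rw [if_neg h, FreeGroup.lift_apply_of, if_neg h])
    (fun i => by
      by_cases h : i = i0
      · rw [if_pos h, h, _root_.map_mul, _root_.map_mul, map_zpow, FreeGroup.lift_apply_of,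
          FreeGroup.lift_apply_of, if_neg (Ne.symm hij), if_pos rfl]
        group
      · rw [if_neg h, FreeGroup.lift_apply_of, if_neg h])

lemma transAut_of (i0 j0 : Fin n) (c : ℤ) (hij : i0 ≠ j0) (i : Fin n) :
    transAut i0 j0 c hij (FreeGroup.of i)
      = if i = i0 then FreeGroup.of j0 ^ c * FreeGroup.of i0 * FreeGroup.of j0 ^ c
        else FreeGroup.of i := by
  show FreeGroup.lift (fun i => if i = i0 then
      FreeGroup.of j0 ^ c * FreeGroup.of i0 * FreeGroup.of j0 ^ c
    else FreeGroup.of i) (FreeGroup.of i) = _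
  exact FreeGroup.lift_apply_of

lemma realiz_transvection (i0 j0 : Fin n) (c : ℤ) (hij : i0 ≠ j0) :
    Realiz n (Matrix.transvection i0 j0 (2 * c)) := by
  refine ⟨transAut i0 j0 c hij, revCommute_of_gen _ fun i => ?_, ?_⟩
  · rw [transAut_of]
    by_cases h : i = i0
    · rw [if_pos h]
      rw [revF_mul, revF_mul, revF_zpow, revF_of, revF_of]
      group
    · rw [if_neg h, revF_of]
  · ext i j
    rw [psiMat_apply, transAut_of]
    have hT : Matrix.transvection i0 j0 (2*c) i j
        = (if i = j then (1:ℤ) else 0) + (if i0 = i ∧ j0 = j then 2*c else 0) := by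
      rw [Matrix.transvection, Matrix.add_apply, Matrix.one_apply]
      congr 1
    rw [hT]
    by_cases h : i = i0
    · rw [if_pos h]
      simp only [expSum_mul, expSum_zpow, expSum_of]
      by_cases hj : j = j0
      · rw [if_pos (⟨h.symm, hj.symm⟩ : i0 = i ∧ j0 = j),
          if_pos hj.symm,
          if_neg (fun hh : i0 = j => hij (hh.trans hj)),
          if_neg (fun hh : i = j => hij (h.symm.trans (hh.trans hj)))]
        ring
      · rw [if_neg (fun hh : j0 = j => hj hh.symm),
          if_neg (fun hh : i0 = i ∧ j0 = j => hj hh.2.symm), h]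
        ring
    · rw [if_neg h, expSum_of, if_neg (fun hh : i0 = i ∧ j0 = j => h hh.1.symm)]
      ring

end Generators


section Algorithm

/-- each row has a unique odd entry -/
def OddRow (M : Matrix (Fin n) (Fin n) ℤ) : Prop := ∀ i, ∃! j, Odd (M i j)

/-- the matrix agrees with the identity wherever the row or column index is < k -/
def InvK (k : ℕ) (M : Matrix (Fin n) (Fin n) ℤ) : Prop :=
  ∀ i j : Fin n, ((i : ℕ) < k ∨ (j : ℕ) < k) → M i j = (1 : Matrix (Fin n) (Fin n) ℤ) i j

lemma odd_add_even {x y : ℤ} (hy : Even y) : Odd (x + y) ↔ Odd x := by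
  rw [Int.even_iff] at hy
  rw [Int.odd_iff, Int.odd_iff]
  omega

lemma natAbs_ne_of_parity {x y : ℤ} (hx : Odd x) (hy : Even y) :
    x.natAbs ≠ y.natAbs := by
  rw [Int.odd_iff] at hx
  rw [Int.even_iff] at hy
  omega

lemma exists_near_pos (b a : ℤ) (ha : 0 < a) :
    ∃ c : ℤ, (b + 2 * c * a).natAbs ≤ a.natAbs := by
  refine ⟨-((b + a) / (2 * a)), ?_⟩
  have h2a : (0:ℤ) < 2 * a := by omega
  have h1 := Int.emod_nonneg (b + a) (by omega : (2*a) ≠ 0)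
  have h2 := Int.emod_lt_of_pos (b + a) h2a
  have h3 : b + 2 * -((b + a) / (2 * a)) * a = (b + a) % (2 * a) - a := by
    rw [Int.emod_def]
    ring
  rw [h3]
  omega

lemma exists_near (b a : ℤ) (ha : a ≠ 0) :
    ∃ c : ℤ, (b + 2 * c * a).natAbs ≤ a.natAbs := by
  rcases ha.lt_or_gt with h | h
  · obtain ⟨c, hc⟩ := exists_near_pos b (-a) (by omega)
    refine ⟨-c, ?_⟩
    rw [show b + 2 * -c * a = b + 2 * c * -a by ring]
    simpa using hc
  · exact exists_near_pos b a h

lemma oddRow_congr {M M' : Matrix (Fin n) (Fin n) ℤ}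
    (h : ∀ i j, Odd (M' i j) ↔ Odd (M i j)) (hM : OddRow M) : OddRow M' := by
  intro i
  obtain ⟨j, hj, hu⟩ := hM i
  exact ⟨j, (h i j).2 hj, fun y hy => hu y ((h i y).1 hy)⟩

lemma even_of_oddRow {M : Matrix (Fin n) (Fin n) ℤ} (hM : OddRow M) {i j j' : Fin n}
    (hj : Odd (M i j)) (hne : j' ≠ j) : Even (M i j') := by
  obtain ⟨j0, _, hu⟩ := hM i
  rw [← Int.not_odd_iff_even]
  intro hodd
  exact hne ((hu j' hodd).trans (hu j hj).symm)

lemma zmod2_cast_eq {x y : ℤ} (h : Odd x ↔ Odd y) : (x : ZMod 2) = (y : ZMod 2) := by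
  rw [ZMod.intCast_eq_intCast_iff]
  show x % 2 = y % 2
  rw [Int.odd_iff, Int.odd_iff] at h
  omega

lemma det_odd_row_inj {M : Matrix (Fin n) (Fin n) ℤ} (hdet : IsUnit M.det)
    {i i' : Fin n} (h : ∀ j, Odd (M i j) ↔ Odd (M i' j)) : i = i' := by
  by_contra hne
  have hrow : (M.map ⇑(Int.castRingHom (ZMod 2))) i = (M.map ⇑(Int.castRingHom (ZMod 2))) i' :=
    funext fun j => zmod2_cast_eq (h j)
  have hz : (M.map ⇑(Int.castRingHom (ZMod 2))).det = 0 :=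
    Matrix.det_zero_of_row_eq hne hrow
  have hmap := RingHom.map_det (Int.castRingHom (ZMod 2)) M
  rw [RingHom.mapMatrix_apply, hz] at hmap
  rcases Int.isUnit_iff.1 hdet with h1 | h1 <;> rw [h1] at hmap <;> revert hmap <;> decide

lemma sum_natAbs_lt {f g : Fin n → ℤ} {r : Fin n}
    (h : ∀ x, x ≠ r → g x = f x) (hr : (g r).natAbs < (f r).natAbs) :
    ∑ x, (g x).natAbs < ∑ x, (f x).natAbs := by
  rw [← Finset.add_sum_erase _ (fun x => (g x).natAbs) (Finset.mem_univ r),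
    ← Finset.add_sum_erase _ (fun x => (f x).natAbs) (Finset.mem_univ r)]
  have heq : ∑ x ∈ Finset.univ.erase r, (g x).natAbs
      = ∑ x ∈ Finset.univ.erase r, (f x).natAbs :=
    Finset.sum_congr rfl fun x hx => by rw [h x (Finset.ne_of_mem_erase hx)]
  omega

lemma isUnit_det_Dmat (i0 : Fin n) : IsUnit (Dmat i0).det :=
  IsUnit.of_mul_eq_one _ (by rw [← Matrix.det_mul, Dmat_sq, Matrix.det_one])

lemma isUnit_det_Pmat_swap (a b : Fin n) : IsUnit (Pmat (Equiv.swap a b)).det :=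
  IsUnit.of_mul_eq_one _ (by rw [← Matrix.det_mul, Pmat_swap_sq, Matrix.det_one])

lemma clear_col {k : ℕ} (hk : k < n) (q : Fin n) (hq : k ≤ (q : ℕ))
    (cont : ∀ M : Matrix (Fin n) (Fin n) ℤ, IsUnit M.det → OddRow M → InvK k M →
      Odd (M q ⟨k, hk⟩) → (∀ r, r ≠ q → M r ⟨k, hk⟩ = 0) → Realiz n M) :
    ∀ N : ℕ, ∀ M : Matrix (Fin n) (Fin n) ℤ, IsUnit M.det → OddRow M → InvK k M →
      Odd (M q ⟨k, hk⟩) → (∀ r, r ≠ q → Even (M r ⟨k, hk⟩)) →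
      (∑ r, (M r ⟨k, hk⟩).natAbs) ≤ N → Realiz n M := by
  intro N
  induction N with
  | zero =>
    intro M hdet hodd hinv hpiv hev hsum
    exfalso
    have h0 : (M q ⟨k, hk⟩).natAbs = 0 := by
      have h1 : (M q ⟨k, hk⟩).natAbs ≤ ∑ r, (M r ⟨k, hk⟩).natAbs :=
        Finset.single_le_sum (f := fun r => (M r ⟨k, hk⟩).natAbs)
          (fun x _ => Nat.zero_le _) (Finset.mem_univ q)
      omega
    rw [Int.natAbs_eq_zero] at h0
    rw [h0] at hpiv
    simp at hpiv
  | succ N ih =>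
    intro M hdet hodd hinv hpiv hev hsum
    by_cases hz : ∀ r, r ≠ q → M r ⟨k, hk⟩ = 0
    · exact cont M hdet hodd hinv hpiv hz
    · push_neg at hz
      obtain ⟨r, hrq, hr0⟩ := hz
      have hrk : k ≤ (r : ℕ) := by
        by_contra hlt
        push_neg at hlt
        have h1 := hinv r ⟨k, hk⟩ (Or.inl hlt)
        rw [Matrix.one_apply, if_neg (fun hh : r = ⟨k, hk⟩ => by
          rw [hh] at hlt; exact absurd hlt (by simp))] at h1
        exact hr0 h1
      have ha0 : M q ⟨k, hk⟩ ≠ 0 := fun hh => by rw [hh] at hpiv; simp at hpiv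
      by_cases hcase : (M q ⟨k, hk⟩).natAbs < (M r ⟨k, hk⟩).natAbs
      · -- shrink the entry in row r using pivot row q
        obtain ⟨c, hc⟩ := exists_near (M r ⟨k, hk⟩) (M q ⟨k, hk⟩) ha0
        set M' := Matrix.transvection r q (2*c) * M with hM'
        have happ_same : ∀ b, M' r b = M r b + 2*c * M q b := fun b =>
          Matrix.transvection_mul_apply_same r q b (2*c) M
        have happ_ne : ∀ a b, a ≠ r → M' a b = M a b := fun a b hab =>
          Matrix.transvection_mul_apply_of_ne r q a b hab (2*c) M
        have hdet' : IsUnit M'.det := by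
          rw [hM', Matrix.det_mul, Matrix.det_transvection_of_ne _ _ hrq, one_mul]
          exact hdet
        have hpar : ∀ i j, Odd (M' i j) ↔ Odd (M i j) := by
          intro i j
          by_cases h : i = r
          · subst h
            rw [happ_same]
            exact odd_add_even ⟨c * M q j, by ring⟩
          · rw [happ_ne _ _ h]
        have hodd' : OddRow M' := oddRow_congr hpar hodd
        have hinv' : InvK k M' := by
          intro i j hij
          by_cases h : i = r
          · rcases hij with hij | hij
            · exfalso; rw [h] at hij; omega
            · have hq0 : M q j = 0 := by
                rw [hinv q j (Or.inr hij), Matrix.one_apply,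
                  if_neg (fun hh : q = j => by rw [← hh] at hij; omega)]
              rw [h, happ_same, hq0, hinv r j (Or.inr hij)]
              ring
          · rw [happ_ne _ _ h]
            exact hinv i j hij
        have hpiv' : Odd (M' q ⟨k, hk⟩) := by
          rw [happ_ne _ _ (Ne.symm hrq)]; exact hpiv
        have hev' : ∀ r', r' ≠ q → Even (M' r' ⟨k, hk⟩) := fun r' h => by
          rw [← Int.not_odd_iff_even]
          intro ho
          exact (Int.not_odd_iff_even.2 (hev r' h)) ((hpar r' ⟨k, hk⟩).1 ho)
        have hsum' : (∑ x, (M' x ⟨k, hk⟩).natAbs) ≤ N := by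
          have hlt : (∑ x, (M' x ⟨k, hk⟩).natAbs) < ∑ x, (M x ⟨k, hk⟩).natAbs := by
            apply sum_natAbs_lt (fun x hx => happ_ne x _ hx)
            rw [happ_same]
            have := hc
            omega
          omega
        have hreal' := ih M' hdet' hodd' hinv' hpiv' hev' hsum'
        have hfact : Matrix.transvection r q (2*(-c)) * M' = M := by
          rw [hM', ← Matrix.mul_assoc, Matrix.transvection_mul_transvection_same r q hrq,
            show 2*(-c) + 2*c = 0 by ring, Matrix.transvection_zero, Matrix.one_mul]
        rw [← hfact]
        exact realiz_mul (realiz_transvection r q (-c) hrq) hreal'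
      · -- shrink the pivot using row r
        push_neg at hcase
        obtain ⟨c, hc⟩ := exists_near (M q ⟨k, hk⟩) (M r ⟨k, hk⟩) hr0
        have hqr : q ≠ r := Ne.symm hrq
        set M' := Matrix.transvection q r (2*c) * M with hM'
        have happ_same : ∀ b, M' q b = M q b + 2*c * M r b := fun b =>
          Matrix.transvection_mul_apply_same q r b (2*c) M
        have happ_ne : ∀ a b, a ≠ q → M' a b = M a b := fun a b hab =>
          Matrix.transvection_mul_apply_of_ne q r a b hab (2*c) M
        have hdet' : IsUnit M'.det := by
          rw [hM', Matrix.det_mul, Matrix.det_transvection_of_ne _ _ hqr, one_mul]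
          exact hdet
        have hpar : ∀ i j, Odd (M' i j) ↔ Odd (M i j) := by
          intro i j
          by_cases h : i = q
          · subst h
            rw [happ_same]
            exact odd_add_even ⟨c * M r j, by ring⟩
          · rw [happ_ne _ _ h]
        have hodd' : OddRow M' := oddRow_congr hpar hodd
        have hinv' : InvK k M' := by
          intro i j hij
          by_cases h : i = q
          · rcases hij with hij | hij
            · exfalso; rw [h] at hij; omega
            · have hr0' : M r j = 0 := by
                rw [hinv r j (Or.inr hij), Matrix.one_apply,
                  if_neg (fun hh : r = j => by rw [← hh] at hij; omega)]
              rw [h, happ_same, hr0', hinv q j (Or.inr hij)]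
              ring
          · rw [happ_ne _ _ h]
            exact hinv i j hij
        have hpiv' : Odd (M' q ⟨k, hk⟩) := by
          rw [happ_same]
          exact (odd_add_even ⟨c * M r ⟨k, hk⟩, by ring⟩).2 hpiv
        have hev' : ∀ r', r' ≠ q → Even (M' r' ⟨k, hk⟩) := fun r' h => by
          rw [← Int.not_odd_iff_even]
          intro ho
          exact (Int.not_odd_iff_even.2 (hev r' h)) ((hpar r' ⟨k, hk⟩).1 ho)
        have hsum' : (∑ x, (M' x ⟨k, hk⟩).natAbs) ≤ N := by
          have hne : (M' q ⟨k, hk⟩).natAbs ≠ (M r ⟨k, hk⟩).natAbs :=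
            natAbs_ne_of_parity hpiv' (hev r hrq)
          have hlt : (∑ x, (M' x ⟨k, hk⟩).natAbs) < ∑ x, (M x ⟨k, hk⟩).natAbs := by
            apply sum_natAbs_lt (fun x hx => happ_ne x _ hx)
            rw [happ_same] at hne ⊢
            have := hc
            omega
          omega
        have hreal' := ih M' hdet' hodd' hinv' hpiv' hev' hsum'
        have hfact : Matrix.transvection q r (2*(-c)) * M' = M := by
          rw [hM', ← Matrix.mul_assoc, Matrix.transvection_mul_transvection_same q r hqr,
            show 2*(-c) + 2*c = 0 by ring, Matrix.transvection_zero, Matrix.one_mul]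
        rw [← hfact]
        exact realiz_mul (realiz_transvection q r (-c) hqr) hreal'

end Algorithm


section Algorithm2

lemma invK_succ {k : ℕ} (hk : k < n) {M : Matrix (Fin n) (Fin n) ℤ}
    (hinv : InvK k M)
    (hcol : ∀ i, M i ⟨k, hk⟩ = (1 : Matrix (Fin n) (Fin n) ℤ) i ⟨k, hk⟩)
    (hrow : ∀ j, M ⟨k, hk⟩ j = (1 : Matrix (Fin n) (Fin n) ℤ) ⟨k, hk⟩ j) :
    InvK (k + 1) M := by
  intro i j hij
  by_cases h : (i : ℕ) < k ∨ (j : ℕ) < k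
  · exact hinv i j h
  · push_neg at h
    rcases hij with hij | hij
    · have : i = ⟨k, hk⟩ := Fin.ext (by show (i:ℕ) = k; omega)
      rw [this]
      exact hrow j
    · have : j = ⟨k, hk⟩ := Fin.ext (by show (j:ℕ) = k; omega)
      rw [this]
      exact hcol i

lemma clear_row {k : ℕ} (hk : k < n)
    (cont : ∀ M : Matrix (Fin n) (Fin n) ℤ, IsUnit M.det → OddRow M →
      InvK (k + 1) M → Realiz n M) :
    ∀ N : ℕ, ∀ M : Matrix (Fin n) (Fin n) ℤ, IsUnit M.det → OddRow M → InvK k M →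
      (∀ i, M i ⟨k, hk⟩ = (1 : Matrix (Fin n) (Fin n) ℤ) i ⟨k, hk⟩) →
      ((Finset.univ.filter fun j =>
        M ⟨k, hk⟩ j ≠ (1 : Matrix (Fin n) (Fin n) ℤ) ⟨k, hk⟩ j).card ≤ N) →
      Realiz n M := by
  intro N
  induction N with
  | zero =>
    intro M hdet hodd hinv hcol hcard
    apply cont M hdet hodd
    apply invK_succ hk hinv hcol
    intro j
    by_contra hj
    have : j ∈ Finset.univ.filter fun j =>
        M ⟨k, hk⟩ j ≠ (1 : Matrix (Fin n) (Fin n) ℤ) ⟨k, hk⟩ j :=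
      Finset.mem_filter.2 ⟨Finset.mem_univ j, hj⟩
    have hpos : 0 < (Finset.univ.filter fun j =>
        M ⟨k, hk⟩ j ≠ (1 : Matrix (Fin n) (Fin n) ℤ) ⟨k, hk⟩ j).card :=
      Finset.card_pos.2 ⟨j, this⟩
    omega
  | succ N ih =>
    intro M hdet hodd hinv hcol hcard
    by_cases hdone : ∀ j, M ⟨k, hk⟩ j = (1 : Matrix (Fin n) (Fin n) ℤ) ⟨k, hk⟩ j
    · exact cont M hdet hodd (invK_succ hk hinv hcol hdone)
    · push_neg at hdone
      obtain ⟨j, hj⟩ := hdone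
      have hMkk : M ⟨k, hk⟩ ⟨k, hk⟩ = 1 := by
        rw [hcol ⟨k, hk⟩, Matrix.one_apply_eq]
      have hjk : j ≠ ⟨k, hk⟩ := fun hh => by
        rw [hh, hMkk, Matrix.one_apply_eq] at hj
        exact hj rfl
      have hkj : (⟨k, hk⟩ : Fin n) ≠ j := Ne.symm hjk
      have hjge : ¬ ((j : ℕ) < k) := fun hlt => by
        exact hj (hinv ⟨k, hk⟩ j (Or.inr hlt))
      have hone0 : (1 : Matrix (Fin n) (Fin n) ℤ) ⟨k, hk⟩ j = 0 := by
        rw [Matrix.one_apply, if_neg hkj]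
      have heven : Even (M ⟨k, hk⟩ j) :=
        even_of_oddRow hodd (i := ⟨k, hk⟩) (hMkk ▸ odd_one) hjk
      obtain ⟨m, hm⟩ := heven
      set M' := M * Matrix.transvection ⟨k, hk⟩ j (2 * (-m)) with hM'
      have happ_same : ∀ a, M' a j = M a j + 2 * (-m) * M a ⟨k, hk⟩ := fun a => by
        rw [hM', Matrix.mul_transvection_apply_same ⟨k, hk⟩ j a (2*(-m)) M]
      have happ_ne : ∀ a b, b ≠ j → M' a b = M a b := fun a b hb =>
        Matrix.mul_transvection_apply_of_ne ⟨k, hk⟩ j a b hb (2*(-m)) M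
      have hdet' : IsUnit M'.det := by
        rw [hM', Matrix.det_mul, Matrix.det_transvection_of_ne _ _ hkj, mul_one]
        exact hdet
      have hpar : ∀ a b, Odd (M' a b) ↔ Odd (M a b) := by
        intro a b
        by_cases hb : b = j
        · rw [hb, happ_same]
          exact odd_add_even ⟨(-m) * M a ⟨k, hk⟩, by ring⟩
        · rw [happ_ne _ _ hb]
      have hodd' : OddRow M' := oddRow_congr hpar hodd
      have hfix : M' ⟨k, hk⟩ j = 0 := by
        rw [happ_same, hMkk, hm]
        ring
      have hinv' : InvK k M' := by
        intro a b hab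
        by_cases hb : b = j
        · rcases hab with hab | hab
          · have ha0 : M a ⟨k, hk⟩ = 0 := by
              rw [hcol a, Matrix.one_apply,
                if_neg (fun hh : a = ⟨k, hk⟩ => by
                  rw [hh] at hab; exact absurd hab (lt_irrefl k))]
            rw [hb, happ_same, ha0, hinv a j (Or.inl hab)]
            ring
          · exact absurd hab (hb ▸ hjge)
        · rw [happ_ne _ _ hb]
          exact hinv a b hab
      have hcol' : ∀ i, M' i ⟨k, hk⟩ = (1 : Matrix (Fin n) (Fin n) ℤ) i ⟨k, hk⟩ :=
        fun i => by rw [happ_ne _ _ hkj]; exact hcol i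
      have hcard' : (Finset.univ.filter fun b =>
          M' ⟨k, hk⟩ b ≠ (1 : Matrix (Fin n) (Fin n) ℤ) ⟨k, hk⟩ b).card ≤ N := by
        have hsub : (Finset.univ.filter fun b =>
            M' ⟨k, hk⟩ b ≠ (1 : Matrix (Fin n) (Fin n) ℤ) ⟨k, hk⟩ b) ⊆
            (Finset.univ.filter fun b =>
            M ⟨k, hk⟩ b ≠ (1 : Matrix (Fin n) (Fin n) ℤ) ⟨k, hk⟩ b).erase j := by
          intro x hx
          rw [Finset.mem_filter] at hx
          have hxj : x ≠ j := fun hh => by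
            rw [hh, hfix, hone0] at hx
            exact hx.2 rfl
          refine Finset.mem_erase.2 ⟨hxj, Finset.mem_filter.2 ⟨Finset.mem_univ x, ?_⟩⟩
          rw [← happ_ne _ _ hxj]
          exact hx.2
        have h1 := Finset.card_le_card hsub
        have hjmem : j ∈ Finset.univ.filter fun b =>
            M ⟨k, hk⟩ b ≠ (1 : Matrix (Fin n) (Fin n) ℤ) ⟨k, hk⟩ b :=
          Finset.mem_filter.2 ⟨Finset.mem_univ j, hj⟩
        have h2 := Finset.card_erase_of_mem hjmem
        have h3 : 0 < (Finset.univ.filter fun b =>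
            M ⟨k, hk⟩ b ≠ (1 : Matrix (Fin n) (Fin n) ℤ) ⟨k, hk⟩ b).card :=
          Finset.card_pos.2 ⟨j, hjmem⟩
        omega
      have hreal' := ih M' hdet' hodd' hinv' hcol' hcard'
      have hfact : M' * Matrix.transvection ⟨k, hk⟩ j (2 * m) = M := by
        rw [hM', Matrix.mul_assoc,
          Matrix.transvection_mul_transvection_same ⟨k, hk⟩ j hkj,
          show 2*(-m) + 2*m = 0 by ring, Matrix.transvection_zero, Matrix.mul_one]
      rw [← hfact]
      exact realiz_mul hreal' (realiz_transvection ⟨k, hk⟩ j m hkj)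

end Algorithm2


section Algorithm3

lemma odd_neg_iff (x : ℤ) : Odd (-x) ↔ Odd x := by
  rw [Int.odd_iff, Int.odd_iff]; omega

lemma real_of_inv : ∀ d k : ℕ, k + d = n →
    ∀ M : Matrix (Fin n) (Fin n) ℤ, IsUnit M.det → OddRow M → InvK k M →
    Realiz n M := by
  intro d
  induction d with
  | zero =>
    intro k hkd M _ _ hinv
    have hM1 : M = 1 := by
      ext i j
      exact hinv i j (Or.inl (by omega))
    rw [hM1]
    exact realiz_one
  | succ d ih =>
    intro k hkd M hdet hodd hinv
    have hk : k < n := by omega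
    -- Step 1: find the pivot row q with odd entry in column k
    choose oc hoc using hodd
    have hinj : Function.Injective oc := by
      intro i i' he
      refine det_odd_row_inj hdet fun j => ⟨fun hx => ?_, fun hx => ?_⟩
      · rw [(hoc i).2 j hx, he]; exact (hoc i').1
      · rw [(hoc i').2 j hx, ← he]; exact (hoc i).1
    obtain ⟨q, hq⟩ := Finite.injective_iff_surjective.1 hinj ⟨k, hk⟩
    have hodd' : OddRow M := fun i => ⟨oc i, (hoc i).1, (hoc i).2⟩
    have hpiv : Odd (M q ⟨k, hk⟩) := hq ▸ (hoc q).1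
    have hqk : k ≤ (q : ℕ) := by
      by_contra hlt
      push_neg at hlt
      have h1 := hinv q ⟨k, hk⟩ (Or.inl hlt)
      rw [Matrix.one_apply, if_neg (fun hh : q = ⟨k, hk⟩ => by
        rw [hh] at hlt; exact absurd hlt (lt_irrefl k))] at h1
      rw [h1] at hpiv
      simp at hpiv
    have hev : ∀ r, r ≠ q → Even (M r ⟨k, hk⟩) := by
      intro r hr
      rw [← Int.not_odd_iff_even]
      intro ho
      exact hr (hinj ((((hoc r).2 _ ho).symm).trans hq.symm))
    -- Step 2: clear the column
    refine clear_col hk q hqk ?_ (∑ r, (M r ⟨k, hk⟩).natAbs) M hdet hodd' hinv hpiv hev le_rfl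
    intro M2 hdet2 hodd2 hinv2 hpiv2 hz
    -- Step 4/5 (shared): column k is e_q
    have step4 : ∀ M3 : Matrix (Fin n) (Fin n) ℤ, IsUnit M3.det → OddRow M3 → InvK k M3 →
        (∀ i, M3 i ⟨k, hk⟩ = if i = q then 1 else 0) → Realiz n M3 := by
      intro M3 hdet3 hodd3 hinv3 hcol3
      have hswap_inv : ∀ x y : Fin n, Equiv.swap (⟨k, hk⟩ : Fin n) q x = y ↔
          x = Equiv.swap (⟨k, hk⟩ : Fin n) q y := by
        intro x y
        constructor
        · intro h; rw [← h, Equiv.swap_apply_self]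
        · intro h; rw [h, Equiv.swap_apply_self]
      have happ : ∀ i j, (Pmat (Equiv.swap (⟨k, hk⟩ : Fin n) q) * M3) i j
          = M3 (Equiv.swap (⟨k, hk⟩ : Fin n) q i) j :=
        fun i j => Pmat_mul_apply _ M3 i j
      have hdet4 : IsUnit (Pmat (Equiv.swap (⟨k, hk⟩ : Fin n) q) * M3).det := by
        rw [Matrix.det_mul]
        exact (isUnit_det_Pmat_swap _ _).mul hdet3
      have hodd4 : OddRow (Pmat (Equiv.swap (⟨k, hk⟩ : Fin n) q) * M3) := by
        intro i
        obtain ⟨j, hj, hu⟩ := hodd3 (Equiv.swap (⟨k, hk⟩ : Fin n) q i)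
        refine ⟨j, ?_, fun y hy => hu y ?_⟩
        · show Odd ((Pmat (Equiv.swap (⟨k, hk⟩ : Fin n) q) * M3) i j)
          rw [happ]; exact hj
        · show Odd (M3 (Equiv.swap (⟨k, hk⟩ : Fin n) q i) y)
          rw [← happ]
          exact hy
      have hcol4 : ∀ i, (Pmat (Equiv.swap (⟨k, hk⟩ : Fin n) q) * M3) i ⟨k, hk⟩
          = (1 : Matrix (Fin n) (Fin n) ℤ) i ⟨k, hk⟩ := by
        intro i
        rw [happ, hcol3, Matrix.one_apply]
        simp only [hswap_inv i q, Equiv.swap_apply_right]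
      have hinv4 : InvK k (Pmat (Equiv.swap (⟨k, hk⟩ : Fin n) q) * M3) := by
        intro i j hij
        by_cases hi : (i : ℕ) < k
        · have hii : Equiv.swap (⟨k, hk⟩ : Fin n) q i = i :=
            Equiv.swap_apply_of_ne_of_ne
              (fun hh => by rw [hh] at hi; exact absurd hi (lt_irrefl k))
              (fun hh => by rw [hh] at hi; omega)
          rw [happ, hii]
          exact hinv3 i j hij
        · have hjlt : (j : ℕ) < k := by
            rcases hij with h | h
            · omega
            · exact h
          have hjj : Equiv.swap (⟨k, hk⟩ : Fin n) q j = j :=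
            Equiv.swap_apply_of_ne_of_ne
              (fun hh => by rw [hh] at hjlt; exact absurd hjlt (lt_irrefl k))
              (fun hh => by rw [hh] at hjlt; omega)
          rw [happ, hinv3 _ j (Or.inr hjlt), Matrix.one_apply, Matrix.one_apply]
          simp only [hswap_inv i j, hjj]
      have hreal4 : Realiz n (Pmat (Equiv.swap (⟨k, hk⟩ : Fin n) q) * M3) := by
        refine clear_row hk (fun M5 h1 h2 h3 => ih (k+1) (by omega) M5 h1 h2 h3)
          ((Finset.univ.filter fun j =>
            (Pmat (Equiv.swap (⟨k, hk⟩ : Fin n) q) * M3) ⟨k, hk⟩ j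
              ≠ (1 : Matrix (Fin n) (Fin n) ℤ) ⟨k, hk⟩ j).card)
          _ hdet4 hodd4 hinv4 hcol4 le_rfl
      have hfact : Pmat (Equiv.swap (⟨k, hk⟩ : Fin n) q)
          * (Pmat (Equiv.swap (⟨k, hk⟩ : Fin n) q) * M3) = M3 := by
        rw [← Matrix.mul_assoc, Pmat_swap_sq, Matrix.one_mul]
      rw [← hfact]
      exact realiz_mul (realiz_Pmat _) hreal4
    -- Step 3: the pivot entry is a unit
    have hdvd : M2 q ⟨k, hk⟩ ∣ M2.det := by
      have hfun : (M2 q ⟨k, hk⟩ • fun i => if i = q then (1:ℤ) else 0)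
          = fun i => M2 i ⟨k, hk⟩ := by
        funext i
        by_cases h : i = q
        · simp [h]
        · simp [h, hz i h]
      conv_lhs => skip
      have hupd := Matrix.det_updateCol_smul M2 ⟨k, hk⟩ (M2 q ⟨k, hk⟩)
        (fun i => if i = q then (1:ℤ) else 0)
      rw [hfun, Matrix.updateCol_eq_self] at hupd
      rw [hupd]
      exact Dvd.intro _ rfl
    have hunit : IsUnit (M2 q ⟨k, hk⟩) := isUnit_of_dvd_unit hdvd hdet2
    rcases Int.isUnit_iff.1 hunit with h1 | h1
    · refine step4 M2 hdet2 hodd2 hinv2 fun i => ?_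
      by_cases h : i = q
      · rw [h, if_pos rfl, h1]
      · rw [if_neg h]
        exact hz i h
    · -- multiply row q by -1
      have happD : ∀ i j, (Dmat q * M2) i j = (if i = q then -1 else 1) * M2 i j :=
        fun i j => Dmat_mul_apply q M2 i j
      have hdet3 : IsUnit (Dmat q * M2).det := by
        rw [Matrix.det_mul]
        exact (isUnit_det_Dmat q).mul hdet2
      have hodd3 : OddRow (Dmat q * M2) := by
        refine oddRow_congr (fun i j => ?_) hodd2
        rw [happD]
        by_cases h : i = q
        · rw [if_pos h, neg_one_mul, odd_neg_iff]
        · rw [if_neg h, one_mul]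
      have hinv3 : InvK k (Dmat q * M2) := by
        intro i j hij
        rw [happD]
        by_cases h : i = q
        · rcases hij with hij | hij
          · exfalso; rw [h] at hij; omega
          · have h0 : M2 q j = 0 := by
              rw [hinv2 q j (Or.inr hij), Matrix.one_apply,
                if_neg (fun hh : q = j => by rw [← hh] at hij; omega)]
            rw [if_pos h, h, h0, Matrix.one_apply,
              if_neg (fun hh : q = j => by rw [← hh] at hij; omega)]
            ring
        · rw [if_neg h, one_mul]
          exact hinv2 i j hij
      have hcol3 : ∀ i, (Dmat q * M2) i ⟨k, hk⟩ = if i = q then 1 else 0 := by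
        intro i
        rw [happD]
        by_cases h : i = q
        · rw [if_pos h, if_pos h, h, h1]
          ring
        · rw [if_neg h, if_neg h, one_mul]
          exact hz i h
      have hreal3 := step4 (Dmat q * M2) hdet3 hodd3 hinv3 hcol3
      have hfact : Dmat q * (Dmat q * M2) = M2 := by
        rw [← Matrix.mul_assoc, Dmat_sq, Matrix.one_mul]
      rw [← hfact]
      exact realiz_mul (realiz_Dmat q) hreal3

end Algorithm3


end PalinAux

/-- for `n ≥ 2`, every matrix in `GL_n(ℤ)` having exactly `n - 1` even
entries in each row is the abelianization matrix of some palindromic automorphism. -/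


theorem matrix_with_n_sub_one_even_entries_per_row_is_image_of_palindromic_aut
    (n : ℕ) (hn : 2 ≤ n) (M : Matrix (Fin n) (Fin n) ℤ) (hM : IsUnit M.det)
    (hrow : ∀ i, (Finset.univ.filter fun j => Even (M i j)).card = n - 1) :
    ∃ α : MulAut (FreeGroup (Fin n)), IsPalindromicAut α ∧ psiMat α = M := by

  have hodd : PalinAux.OddRow M := by
    intro i
    have hsub : (Finset.univ.filter fun j => Even (M i j)) ⊆ Finset.univ :=
      Finset.filter_subset _ _
    have hcompl : (Finset.univ.filter fun j => Odd (M i j))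
        = Finset.univ \ (Finset.univ.filter fun j => Even (M i j)) := by
      ext j
      simp [Int.not_even_iff_odd]
    have hcard : (Finset.univ.filter fun j => Odd (M i j)).card = 1 := by
      rw [hcompl, Finset.card_sdiff_of_subset hsub, hrow i, Finset.card_univ, Fintype.card_fin]
      have hle := Finset.card_le_card hsub
      rw [Finset.card_univ, Fintype.card_fin] at hle
      omega
    obtain ⟨j, hj⟩ := Finset.card_eq_one.1 hcard
    refine ⟨j, ?_, fun y hy => ?_⟩
    · have hmem : j ∈ Finset.univ.filter fun j => Odd (M i j) :=
        hj ▸ Finset.mem_singleton_self j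
      exact (Finset.mem_filter.1 hmem).2
    · have hmem : y ∈ Finset.univ.filter fun j => Odd (M i j) :=
        Finset.mem_filter.2 ⟨Finset.mem_univ y, hy⟩
      rw [hj] at hmem
      exact Finset.mem_singleton.1 hmem
  obtain ⟨α, hrev, hpsi⟩ := PalinAux.real_of_inv n 0 (by omega) M hM hodd
    (fun i j h => absurd h (by omega))
  refine ⟨α, fun i => ?_, hpsi⟩
  apply PalinAux.isPalindrome_of_revF
  have h := hrev (FreeGroup.of i)
  rw [PalinAux.revF_of] at h
  exact h
end

section
/- The centralizer in \widehat{GL_3(ℤ)} of the permutation matrix D = [[0,1,0],[1,0,0],[0,0,1]] and the centralizer in \widehat{GL_3(ℤ)} of the permutation matrix E = [[0,0,1],[1,0,0],[0,1,0]] are not conjugate subgroups of \widehat{GL_3(ℤ)}. -/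
/-- Membership in `\widehat{GL_3(ℤ)}`: an invertible integer matrix having exactly
2 even entries in each row. -/
def InGLhat3 (M : Matrix (Fin 3) (Fin 3) ℤ) : Prop :=
  IsUnit M.det ∧ ∀ i, (Finset.univ.filter fun j => Even (M i j)).card = 2

/-- The centralizer of the matrix `A` inside `\widehat{GL_3(ℤ)}`, as a set of
matrices. -/
def ZCent (A : Matrix (Fin 3) (Fin 3) ℤ) : Set (Matrix (Fin 3) (Fin 3) ℤ) :=
  {X | InGLhat3 X ∧ X * A = A * X}


open Matrix Finset

/-- Permutation-type matrix over `ZMod 2` with a `1` in column `f i` of row `i`. -/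
def Pm (f : Fin 3 → Fin 3) : Matrix (Fin 3) (Fin 3) (ZMod 2) :=
  Matrix.of fun i j => if j = f i then 1 else 0

set_option maxRecDepth 10000 in
lemma key : ∀ f g : Fin 3 → Fin 3, (Pm g).det ≠ 0 →
    Pm f * !![0, 1, 0; 1, 0, 0; 0, 0, 1] = !![0, 1, 0; 1, 0, 0; 0, 0, 1] * Pm f →
    Pm g * Pm f ≠ !![0, 0, 1; 1, 0, 0; 0, 1, 0] * Pm g := by decide

lemma cast_even {n : ℤ} (h : Even n) : (n : ZMod 2) = 0 := by
  obtain ⟨k, rfl⟩ := h; push_cast; exact CharTwo.add_self_eq_zero _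

lemma cast_odd {n : ℤ} (h : ¬ Even n) : (n : ZMod 2) = 1 := by
  rw [Int.not_even_iff_odd] at h
  obtain ⟨k, rfl⟩ := h; push_cast
  rw [show (2 : ZMod 2) = 0 by decide]; ring

/-- Any `InGLhat3`-type row condition forces the mod-2 reduction to be of `Pm` form. -/
lemma exists_perm (M : Matrix (Fin 3) (Fin 3) ℤ)
    (h : ∀ i, (Finset.univ.filter fun j => Even (M i j)).card = 2) :
    ∃ f : Fin 3 → Fin 3, (Int.castRingHom (ZMod 2)).mapMatrix M = Pm f := by
  have h1 : ∀ i : Fin 3, ∃ a, (Finset.univ.filter fun j => ¬ Even (M i j)) = {a} := by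
    intro i
    rw [← Finset.card_eq_one]
    have := Finset.card_filter_add_card_filter_not (s := (Finset.univ : Finset (Fin 3)))
      (p := fun j => Even (M i j))
    simp only [h i, Finset.card_univ, Fintype.card_fin] at this
    omega
  choose f hf using h1
  refine ⟨f, ?_⟩
  ext i j
  simp only [RingHom.mapMatrix_apply, Matrix.map_apply, Int.coe_castRingHom, Pm, Matrix.of_apply]
  by_cases hj : j = f i
  · have : j ∈ (Finset.univ.filter fun j => ¬ Even (M i j)) := by rw [hf i, hj]; simp
    simp only [Finset.mem_filter] at this
    subst hj; simp [cast_odd this.2]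
  · have : j ∉ (Finset.univ.filter fun j => ¬ Even (M i j)) := by rw [hf i]; simp [hj]
    simp only [Finset.mem_filter, Finset.mem_univ, true_and, not_not] at this
    simp [hj, cast_even this]

/-- the centralizers in `\widehat{GL_3(ℤ)}` of the permutation matrices
`D = [[0,1,0],[1,0,0],[0,0,1]]` and `E = [[0,0,1],[1,0,0],[0,1,0]]` are not conjugate
subgroups of `\widehat{GL_3(ℤ)}`. -/
theorem centralizers_of_tau12_and_tau123_images_not_conjugate :
    ¬ ∃ R : Matrix (Fin 3) (Fin 3) ℤ, InGLhat3 R ∧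
      (fun X => R * X * R⁻¹) '' ZCent !![0, 1, 0; 1, 0, 0; 0, 0, 1]
        = ZCent !![0, 0, 1; 1, 0, 0; 0, 1, 0] := by
  rintro ⟨R, hR, himg⟩
  -- E is in its own centralizer
  have hE : (!![0, 0, 1; 1, 0, 0; 0, 1, 0] : Matrix (Fin 3) (Fin 3) ℤ)
      ∈ ZCent !![0, 0, 1; 1, 0, 0; 0, 1, 0] := by
    refine ⟨⟨?_, by decide⟩, rfl⟩
    have : (!![0, 0, 1; 1, 0, 0; 0, 1, 0] : Matrix (Fin 3) (Fin 3) ℤ).det = 1 := by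
      simp [Matrix.det_fin_three]
    rw [this]; exact isUnit_one
  rw [← himg] at hE
  obtain ⟨X, ⟨⟨hXdet, hXrow⟩, hXD⟩, hconj⟩ := hE
  simp only at hconj
  -- turn the conjugation equation into R * X = E * R
  have hRX : R * X = !![0, 0, 1; 1, 0, 0; 0, 1, 0] * R := by
    have h1 := congrArg (· * R) hconj
    simpa [mul_assoc, Matrix.nonsing_inv_mul R hR.1] using h1
  -- reduce everything mod 2
  obtain ⟨f, hf⟩ := exists_perm X hXrow
  obtain ⟨g, hg⟩ := exists_perm R hR.2
  have hD2 : (Int.castRingHom (ZMod 2)).mapMatrix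
      (!![0, 1, 0; 1, 0, 0; 0, 0, 1] : Matrix (Fin 3) (Fin 3) ℤ)
      = !![0, 1, 0; 1, 0, 0; 0, 0, 1] := by
    ext i j; fin_cases i <;> fin_cases j <;>
      simp [Matrix.vecHead, Matrix.vecTail]
  have hE2 : (Int.castRingHom (ZMod 2)).mapMatrix
      (!![0, 0, 1; 1, 0, 0; 0, 1, 0] : Matrix (Fin 3) (Fin 3) ℤ)
      = !![0, 0, 1; 1, 0, 0; 0, 1, 0] := by
    ext i j; fin_cases i <;> fin_cases j <;>
      simp [Matrix.vecHead, Matrix.vecTail]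
  have hdet : (Pm g).det ≠ 0 := by
    have h2 := hR.1.map (Int.castRingHom (ZMod 2))
    rw [RingHom.map_det, hg] at h2
    exact h2.ne_zero
  have hcomm := congrArg ((Int.castRingHom (ZMod 2)).mapMatrix) hXD
  rw [_root_.map_mul, _root_.map_mul, hf, hD2] at hcomm
  have hfin := congrArg ((Int.castRingHom (ZMod 2)).mapMatrix) hRX
  rw [_root_.map_mul, _root_.map_mul, hf, hg, hE2] at hfin
  exact key f g hdet hcomm hfin
end

section
/- The only element of order 2 in the centralizer of the permutation matrix E = [[0,0,1],[1,0,0],[0,1,0]] within \widehat{GL_3(ℤ)} is −I_3. -/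
/-- the only element of order 2 in the centralizer of
`E = [[0,0,1],[1,0,0],[0,1,0]]` within `\widehat{GL_3(ℤ)}` is `-I₃`. -/
theorem neg_id_unique_order_two_element_in_centralizer_of_E
    (X : Matrix (Fin 3) (Fin 3) ℤ) (hX : InGLhat3 X)
    (hcomm : X * !![0, 0, 1; 1, 0, 0; 0, 1, 0] = !![0, 0, 1; 1, 0, 0; 0, 1, 0] * X) :
    (X * X = 1 ∧ X ≠ 1) ↔ X = -1 := by
  constructor
  · rintro ⟨hsq, hne⟩
    have hE : ∀ i j, (X * !![(0:ℤ), 0, 1; 1, 0, 0; 0, 1, 0]) i j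
        = (!![(0:ℤ), 0, 1; 1, 0, 0; 0, 1, 0] * X) i j := fun i j => by rw [hcomm]
    have e00 := hE 0 0; have e01 := hE 0 1; have e02 := hE 0 2
    have e10 := hE 1 0; have e11 := hE 1 1; have e12 := hE 1 2
    simp [Matrix.mul_apply, Fin.sum_univ_three, Matrix.vecHead, Matrix.vecTail]
      at e00 e01 e02 e10 e11 e12
    have hform : X = !![X 0 0, X 0 1, X 0 2; X 0 2, X 0 0, X 0 1; X 0 1, X 0 2, X 0 0] := by
      ext i j
      fin_cases i <;> fin_cases j <;> simp <;> omega
    set a := X 0 0; set b := X 0 1; set c := X 0 2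
    have h1 : a * a + 2 * (b * c) = 1 := by
      have := congrFun (congrFun hsq 0) 0
      simp [hform, Matrix.mul_apply, Fin.sum_univ_three, Matrix.one_apply] at this
      linarith
    have h2 : c * c + 2 * (a * b) = 0 := by
      have := congrFun (congrFun hsq 0) 1
      simp [hform, Matrix.mul_apply, Fin.sum_univ_three, Matrix.one_apply] at this
      linarith
    have h3 : b * b + 2 * (a * c) = 0 := by
      have := congrFun (congrFun hsq 0) 2
      simp [hform, Matrix.mul_apply, Fin.sum_univ_three, Matrix.one_apply] at this
      linarith
    have hbc : b * c = 0 := by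
      have key : (b * c) * (b * c - 4 * (a * a)) = 0 := by nlinarith
      rcases mul_eq_zero.mp key with h | h
      · exact h
      · exfalso
        have h9 : 9 * (a * a) = 1 := by linarith
        have hk : 0 ≤ a * a := mul_self_nonneg a
        generalize a * a = k at h9 hk
        omega
    have hb : b = 0 := by
      rcases mul_eq_zero.mp hbc with h | h
      · exact h
      · nlinarith
    have hc : c = 0 := by nlinarith
    have haa : a * a = 1 := by nlinarith
    rcases Int.eq_one_or_neg_one_of_mul_eq_one' haa with ⟨h, -⟩ | ⟨h, -⟩
    · exfalso; apply hne
      rw [hform, h, hb, hc]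
      ext i j
      fin_cases i <;> fin_cases j <;>
        simp [Matrix.one_apply, Matrix.vecHead, Matrix.vecTail]
    · rw [hform, h, hb, hc]
      ext i j
      fin_cases i <;> fin_cases j <;>
        simp [Matrix.one_apply, Matrix.vecHead, Matrix.vecTail]
  · intro h
    subst h
    refine ⟨by norm_num, fun h => ?_⟩
    have := congrFun (congrFun h 0) 0
    simp [Matrix.one_apply, Matrix.neg_apply] at this
end

section
/- For every pair of indices 1 ≤ i ≠ j ≤ 3, every non-identity element of the centralizer of I_3 + 2E_{ij} in \widehat{GL_3(ℤ)} has order 2 or infinite order; that is, no element of this centralizer has finite order greater than 2. -/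
private lemma cover3 : ∀ i j k a : Fin 3, i ≠ j → i ≠ k → j ≠ k →
    a = i ∨ a = j ∨ a = k := by decide

private lemma exists3 : ∀ i j : Fin 3, i ≠ j → ∃ k, i ≠ k ∧ j ≠ k := by decide

private lemma sum3 {i j k : Fin 3} (hij : i ≠ j) (hik : i ≠ k) (hjk : j ≠ k)
    (f : Fin 3 → ℤ) : (∑ c, f c) = f i + f j + f k := by
  fin_cases i <;> fin_cases j <;> fin_cases k <;> simp_all [Fin.sum_univ_three] <;> ring

/-- for `i ≠ j`, no element of the centralizer of `I + 2E_{ij}` in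
`\widehat{GL_3(ℤ)}` has finite order greater than 2: any element of finite order
squares to the identity (so every non-identity element has order 2 or infinite
order). -/
theorem elements_of_centralizer_of_Aij_have_order_two_or_infinite
    (i j : Fin 3) (hij : i ≠ j) (X : Matrix (Fin 3) (Fin 3) ℤ) (hX : InGLhat3 X)
    (hcomm : X * (1 + Matrix.single i j 2)
      = (1 + Matrix.single i j 2) * X)
    (n : ℕ) (hn : 0 < n) (hpow : X ^ n = 1) :
    X ^ 2 = 1 := by
  obtain ⟨k, hik, hjk⟩ := exists3 i j hij
  -- commutation with the std basis matrix
  have hS : X * Matrix.single i j 2 = Matrix.single i j 2 * X := by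
    have h := hcomm
    simp only [mul_add, add_mul, mul_one, one_mul] at h
    exact add_left_cancel h
  have hent : ∀ a b, X a i * (if j = b then (2:ℤ) else 0)
      = (if i = a then (2:ℤ) else 0) * X j b := by
    intro a b
    have h := congrFun (congrFun hS a) b
    rw [Matrix.mul_apply, Matrix.mul_apply] at h
    simpa [Matrix.single, mul_ite, ite_mul, ite_and,
      Finset.sum_ite_eq, Finset.sum_ite_eq'] using h
  have h1 : ∀ a, a ≠ i → X a i = 0 := by
    intro a ha
    have h := hent a j
    simp [Ne.symm ha] at h
    linarith
  have h2 : ∀ b, b ≠ j → X j b = 0 := by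
    intro b hb
    have h := hent i b
    simp [Ne.symm hb] at h
    linarith
  -- entry recurrence for powers
  have hrec : ∀ (m : ℕ) a b, (X ^ (m + 1)) a b
      = (X ^ m) a i * X i b + (X ^ m) a j * X j b + (X ^ m) a k * X k b := by
    intro m a b
    rw [pow_succ, Matrix.mul_apply, sum3 hij hik hjk]
  -- row j of X^m
  have Lr : ∀ m : ℕ, (X ^ m) j j = (X j j) ^ m ∧ ∀ b, b ≠ j → (X ^ m) j b = 0 := by
    intro m
    induction m with
    | zero =>
      exact ⟨by simp, fun b hb => by simp [Matrix.one_apply_ne (Ne.symm hb)]⟩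
    | succ m ih =>
      constructor
      · rw [hrec, ih.2 i hij, ih.2 k (Ne.symm hjk), ih.1]; ring
      · intro b hb
        rw [hrec, ih.2 i hij, ih.2 k (Ne.symm hjk), ih.1, h2 b hb]; ring
  -- column i of X^m
  have Lc : ∀ m : ℕ, (X ^ m) i i = (X i i) ^ m ∧ ∀ a, a ≠ i → (X ^ m) a i = 0 := by
    intro m
    induction m with
    | zero =>
      exact ⟨by simp, fun a ha => by simp [Matrix.one_apply_ne ha]⟩
    | succ m ih =>
      constructor
      · rw [hrec, h2 i hij, h1 k (Ne.symm hik), ih.1]; ring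
      · intro a ha
        rw [hrec, h2 i hij, h1 k (Ne.symm hik), ih.2 a ha]; ring
  have Lk : ∀ m : ℕ, (X ^ m) k k = (X k k) ^ m := by
    intro m
    induction m with
    | zero => simp
    | succ m ih =>
      rw [hrec, (Lc m).2 k (Ne.symm hik), h2 k (Ne.symm hjk), ih]; ring
  -- the three diagonal entries square to 1
  have sq1 : ∀ x : ℤ, x ^ n = 1 → x ^ 2 = 1 := by
    intro x hx
    rcases Int.isUnit_iff.mp (IsUnit.of_pow_eq_one hx hn.ne') with h | h <;> rw [h] <;> norm_num
  have hd2 : (X i i) ^ 2 = 1 := by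
    refine sq1 _ ?_
    have h := congrFun (congrFun hpow i) i
    rw [(Lc n).1] at h
    simpa [Matrix.one_apply] using h
  have hd'2 : (X j j) ^ 2 = 1 := by
    refine sq1 _ ?_
    have h := congrFun (congrFun hpow j) j
    rw [(Lr n).1] at h
    simpa [Matrix.one_apply] using h
  have he2 : (X k k) ^ 2 = 1 := by
    refine sq1 _ ?_
    have h := congrFun (congrFun hpow k) k
    rw [Lk n] at h
    simpa [Matrix.one_apply] using h
  -- entries of Y = X^2
  have hYe : ∀ a b, (X ^ 2) a b = X a i * X i b + X a j * X j b + X a k * X k b := by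
    intro a b
    rw [pow_two, Matrix.mul_apply, sum3 hij hik hjk]
  have Yii : (X ^ 2) i i = 1 := by
    rw [hYe, h2 i hij, h1 k (Ne.symm hik)]
    linear_combination hd2
  have Yjj : (X ^ 2) j j = 1 := by
    rw [hYe, h2 i hij, h2 k (Ne.symm hjk)]
    linear_combination hd'2
  have Ykk : (X ^ 2) k k = 1 := by
    rw [hYe, h1 k (Ne.symm hik), h2 k (Ne.symm hjk)]
    linear_combination he2
  have Yji : (X ^ 2) j i = 0 := by
    rw [hYe, h2 i hij, h2 k (Ne.symm hjk), h1 k (Ne.symm hik)]; ring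
  have Yjk : (X ^ 2) j k = 0 := by
    rw [hYe, h2 i hij, h2 k (Ne.symm hjk)]; ring
  have Yki : (X ^ 2) k i = 0 := by
    rw [hYe, h1 k (Ne.symm hik), h2 i hij]; ring
  have hrecY : ∀ (m : ℕ) a b, ((X ^ 2) ^ (m + 1)) a b
      = ((X ^ 2) ^ m) a i * (X ^ 2) i b + ((X ^ 2) ^ m) a j * (X ^ 2) j b
        + ((X ^ 2) ^ m) a k * (X ^ 2) k b := by
    intro m a b
    rw [pow_succ, Matrix.mul_apply, sum3 hij hik hjk]
  have hYn : (X ^ 2) ^ n = 1 := by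
    rw [← pow_mul, mul_comm, pow_mul, hpow, one_pow]
  have C1 : ∀ m : ℕ, ((X ^ 2) ^ m) i i = 1 ∧ ((X ^ 2) ^ m) i k = m * (X ^ 2) i k := by
    intro m
    induction m with
    | zero => simp [Matrix.one_apply, hik]
    | succ m ih =>
      constructor
      · rw [hrecY, ih.1, Yii, Yji, Yki]; ring
      · rw [hrecY, ih.1, ih.2, Yjk, Ykk]; push_cast; ring
  have q0 : (X ^ 2) i k = 0 := by
    have h := (C1 n).2
    rw [hYn] at h
    have h0 : (0 : ℤ) = n * (X ^ 2) i k := by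
      simpa [Matrix.one_apply, hik] using h
    rcases mul_eq_zero.mp h0.symm with h | h
    · exact absurd h (by exact_mod_cast hn.ne')
    · exact h
  have C2 : ∀ m : ℕ, ((X ^ 2) ^ m) k i = 0 ∧ ((X ^ 2) ^ m) k k = 1
      ∧ ((X ^ 2) ^ m) k j = m * (X ^ 2) k j := by
    intro m
    induction m with
    | zero => simp [Matrix.one_apply, Ne.symm hik, Ne.symm hjk]
    | succ m ih =>
      refine ⟨?_, ?_, ?_⟩
      · rw [hrecY, ih.1, Yji, Yki]; ring
      · rw [hrecY, ih.1, ih.2.1, Yjk, Ykk]; ring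
      · rw [hrecY, ih.1, ih.2.1, ih.2.2, Yjj]; push_cast; ring
  have r0 : (X ^ 2) k j = 0 := by
    have h := (C2 n).2.2
    rw [hYn] at h
    have h0 : (0 : ℤ) = n * (X ^ 2) k j := by
      simpa [Matrix.one_apply, Ne.symm hjk] using h
    rcases mul_eq_zero.mp h0.symm with h | h
    · exact absurd h (by exact_mod_cast hn.ne')
    · exact h
  have C3 : ∀ m : ℕ, ((X ^ 2) ^ m) i j = m * (X ^ 2) i j := by
    intro m
    induction m with
    | zero => simp [Matrix.one_apply, hij]
    | succ m ih =>
      rw [hrecY, (C1 m).1, ih, (C1 m).2, Yjj, r0]; push_cast; ring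
  have p0 : (X ^ 2) i j = 0 := by
    have h := C3 n
    rw [hYn] at h
    have h0 : (0 : ℤ) = n * (X ^ 2) i j := by
      simpa [Matrix.one_apply, hij] using h
    rcases mul_eq_zero.mp h0.symm with h | h
    · exact absurd h (by exact_mod_cast hn.ne')
    · exact h
  ext a b
  rcases cover3 i j k a hij hik hjk with ha | ha | ha <;>
    rcases cover3 i j k b hij hik hjk with hb | hb | hb <;>
      rw [ha, hb] <;>
        simp [Matrix.one_apply, Yii, Yjj, Ykk, Yji, Yjk, Yki, p0, q0, r0,
          hij, hik, hjk, Ne.symm hij, Ne.symm hik, Ne.symm hjk]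
end

section
/- For all indices 1 ≤ i ≠ j ≤ 3 and 1 ≤ k ≤ 3, the centralizer of I_3 + 2E_{ij} in \widehat{GL_3(ℤ)} and the centralizer of D_k in \widehat{GL_3(ℤ)} are not conjugate subgroups of \widehat{GL_3(ℤ)}, where D_k is the diagonal matrix with −1 in position (k,k) and 1 in the other two diagonal positions. -/
private lemma finmk0 (h : 0 < 3) : (⟨0, h⟩ : Fin 3) = 0 := rfl
private lemma finmk1 (h : 1 < 3) : (⟨1, h⟩ : Fin 3) = 1 := rfl
private lemma finmk2 (h : 2 < 3) : (⟨2, h⟩ : Fin 3) = 2 := rfl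
private lemma finfact01 : ((0:Fin 3) = 1) = False := by decide
private lemma finfact02 : ((0:Fin 3) = 2) = False := by decide
private lemma finfact10 : ((1:Fin 3) = 0) = False := by decide
private lemma finfact12 : ((1:Fin 3) = 2) = False := by decide
private lemma finfact20 : ((2:Fin 3) = 0) = False := by decide
private lemma finfact21 : ((2:Fin 3) = 1) = False := by decide

private lemma main_aux (i j : Fin 3) (hij : i ≠ j) (D : Matrix (Fin 3) (Fin 3) ℤ)
    (hDD : D * D = 1) (hD1 : D ≠ 1) (hD2 : D ≠ -1) (hDmem : D ∈ ZCent D)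
    (R : Matrix (Fin 3) (Fin 3) ℤ) (hR : InGLhat3 R)
    (heq : (fun X => R * X * R⁻¹) '' ZCent (1 + Matrix.single i j 2) = ZCent D) :
    False := by
  have hRinv : R * R⁻¹ = 1 := Matrix.mul_nonsing_inv R hR.1
  have hRinv' : R⁻¹ * R = 1 := Matrix.nonsing_inv_mul R hR.1
  have cancel : ∀ P Q : Matrix (Fin 3) (Fin 3) ℤ, R * P * R⁻¹ = R * Q * R⁻¹ → P = Q := by
    intro P Q h
    have h2 := congrArg (fun M => R⁻¹ * M * R) h
    simp only [Matrix.mul_assoc] at h2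
    rw [hRinv'] at h2
    simpa [← Matrix.mul_assoc, hRinv', hRinv] using h2
  have hmul : ∀ P Q : Matrix (Fin 3) (Fin 3) ℤ,
      (R * P * R⁻¹) * (R * Q * R⁻¹) = R * (P * Q) * R⁻¹ := by
    intro P Q
    calc (R * P * R⁻¹) * (R * Q * R⁻¹) = R * (P * ((R⁻¹ * R) * (Q * R⁻¹))) := by
          simp only [Matrix.mul_assoc]
      _ = R * (P * Q) * R⁻¹ := by rw [hRinv', Matrix.one_mul]; simp only [Matrix.mul_assoc]
  rw [← heq] at hDmem
  obtain ⟨W, hWmem, hRW⟩ := hDmem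
  simp only at hRW
  have comm : ∀ Y ∈ ZCent (1 + Matrix.single i j 2), Y * W = W * Y := by
    intro Y hY
    have h1 : R * Y * R⁻¹ ∈ ZCent D := by
      rw [← heq]; exact ⟨Y, hY, rfl⟩
    have h2 := h1.2
    rw [← hRW, hmul, hmul] at h2
    exact cancel _ _ h2
  have hWsq : W * W = 1 := by
    apply cancel
    rw [← hmul, hRW, hDD, Matrix.mul_one, hRinv]
  have hWne1 : W ≠ 1 := by
    intro h
    rw [h, Matrix.mul_one, hRinv] at hRW
    exact hD1 hRW.symm
  have hWne2 : W ≠ -1 := by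
    intro h
    rw [h] at hRW
    simp only [Matrix.mul_neg, Matrix.neg_mul, Matrix.mul_one] at hRW
    rw [hRinv] at hRW
    exact hD2 hRW.symm
  fin_cases i <;> fin_cases j
  · exact absurd rfl hij
  · have c3 := hWmem.2
    have c1 := comm (Matrix.diagonal (fun t => if t = (2:Fin 3) then (-1:ℤ) else 1))
      ⟨⟨by rw [show (Matrix.diagonal (fun t => if t = (2:Fin 3) then (-1:ℤ) else 1)).det = -1 from by decide]; exact isUnit_one.neg, by decide⟩, by decide⟩
    have c2 := comm (1 + Matrix.single (0:Fin 3) (2:Fin 3) (2:ℤ))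
      ⟨⟨by rw [show (1 + Matrix.single (0:Fin 3) (2:Fin 3) (2:ℤ)).det = 1 from by decide]; exact isUnit_one, by decide⟩, by decide⟩
    have eA := fun a b => congrFun (congrFun c3 a) b
    have eD := fun a b => congrFun (congrFun c1 a) b
    have eT := fun a b => congrFun (congrFun c2 a) b
    have eS := fun a b => congrFun (congrFun hWsq a) b
    simp only [Matrix.mul_apply, Matrix.add_apply, Matrix.one_apply, Fin.sum_univ_three,
      Matrix.single, Matrix.diagonal, Matrix.of_apply] at eA eD eT eS
    have p1 := eA 1 1; have p2 := eA 2 1; have p3 := eA 0 2; have p4 := eA 0 1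
    have p5 := eD 0 2; have p6 := eD 2 1; have p7 := eT 0 2
    have s1 := eS 0 0; have s2 := eS 0 1
    clear eA eD eT eS c1 c2 c3
    norm_num [finmk0, finmk1, finmk2, finfact01, finfact02, finfact10, finfact12, finfact20, finfact21]
      at p1 p2 p3 p4 p5 p6 p7 s1 s2
    have hzji : W 1 0 = 0 := by omega
    have hzmi : W 2 0 = 0 := by omega
    have hzjm : W 1 2 = 0 := by omega
    have hzim : W 0 2 = 0 := by omega
    have hzmj : W 2 1 = 0 := by omega
    have hjj : W 1 1 = W 0 0 := by omega
    have hmm2 : W 2 2 = W 0 0 := by omega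
    have hq : W 0 0 * W 0 0 = 1 := by
      linear_combination s1 - W 0 1 * hzji - W 0 2 * hzmi
    have hl : W 0 0 = 1 ∨ W 0 0 = -1 := mul_self_eq_one_iff.mp hq
    have hzij : W 0 1 = 0 := by
      have h2 : W 0 0 * W 0 1 + W 0 1 * W 1 1 + W 0 2 * W 2 1 = 0 := by
        linear_combination s2
      rw [hzim, hjj] at h2
      rcases hl with h | h <;> rw [h] at h2 <;> ring_nf at h2 <;> omega
    rcases hl with h | h
    · refine hWne1 ?_
      rw [← Matrix.ext_iff]
      intro a b
      fin_cases a <;> fin_cases b <;>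
        norm_num [Matrix.one_apply, finmk0, finmk1, finmk2, finfact01, finfact02, finfact10, finfact12, finfact20, finfact21] <;>
        first | omega | (rw [if_neg (by decide)]; omega) | (rw [if_pos (by decide)]; omega)
    · refine hWne2 ?_
      rw [← Matrix.ext_iff]
      intro a b
      fin_cases a <;> fin_cases b <;>
        norm_num [Matrix.one_apply, Matrix.neg_apply, finmk0, finmk1, finmk2, finfact01, finfact02, finfact10, finfact12, finfact20, finfact21] <;>
        first | omega | (rw [if_neg (by decide)]; omega) | (rw [if_pos (by decide)]; omega)
  · have c3 := hWmem.2
    have c1 := comm (Matrix.diagonal (fun t => if t = (1:Fin 3) then (-1:ℤ) else 1))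
      ⟨⟨by rw [show (Matrix.diagonal (fun t => if t = (1:Fin 3) then (-1:ℤ) else 1)).det = -1 from by decide]; exact isUnit_one.neg, by decide⟩, by decide⟩
    have c2 := comm (1 + Matrix.single (0:Fin 3) (1:Fin 3) (2:ℤ))
      ⟨⟨by rw [show (1 + Matrix.single (0:Fin 3) (1:Fin 3) (2:ℤ)).det = 1 from by decide]; exact isUnit_one, by decide⟩, by decide⟩
    have eA := fun a b => congrFun (congrFun c3 a) b
    have eD := fun a b => congrFun (congrFun c1 a) b
    have eT := fun a b => congrFun (congrFun c2 a) b
    have eS := fun a b => congrFun (congrFun hWsq a) b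
    simp only [Matrix.mul_apply, Matrix.add_apply, Matrix.one_apply, Fin.sum_univ_three,
      Matrix.single, Matrix.diagonal, Matrix.of_apply] at eA eD eT eS
    have p1 := eA 2 2; have p2 := eA 1 2; have p3 := eA 0 1; have p4 := eA 0 2
    have p5 := eD 0 1; have p6 := eD 1 2; have p7 := eT 0 1
    have s1 := eS 0 0; have s2 := eS 0 2
    clear eA eD eT eS c1 c2 c3
    norm_num [finmk0, finmk1, finmk2, finfact01, finfact02, finfact10, finfact12, finfact20, finfact21]
      at p1 p2 p3 p4 p5 p6 p7 s1 s2
    have hzji : W 2 0 = 0 := by omega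
    have hzmi : W 1 0 = 0 := by omega
    have hzjm : W 2 1 = 0 := by omega
    have hzim : W 0 1 = 0 := by omega
    have hzmj : W 1 2 = 0 := by omega
    have hjj : W 2 2 = W 0 0 := by omega
    have hmm2 : W 1 1 = W 0 0 := by omega
    have hq : W 0 0 * W 0 0 = 1 := by
      linear_combination s1 - W 0 2 * hzji - W 0 1 * hzmi
    have hl : W 0 0 = 1 ∨ W 0 0 = -1 := mul_self_eq_one_iff.mp hq
    have hzij : W 0 2 = 0 := by
      have h2 : W 0 0 * W 0 2 + W 0 2 * W 2 2 + W 0 1 * W 1 2 = 0 := by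
        linear_combination s2
      rw [hzim, hjj] at h2
      rcases hl with h | h <;> rw [h] at h2 <;> ring_nf at h2 <;> omega
    rcases hl with h | h
    · refine hWne1 ?_
      rw [← Matrix.ext_iff]
      intro a b
      fin_cases a <;> fin_cases b <;>
        norm_num [Matrix.one_apply, finmk0, finmk1, finmk2, finfact01, finfact02, finfact10, finfact12, finfact20, finfact21] <;>
        first | omega | (rw [if_neg (by decide)]; omega) | (rw [if_pos (by decide)]; omega)
    · refine hWne2 ?_
      rw [← Matrix.ext_iff]
      intro a b
      fin_cases a <;> fin_cases b <;>
        norm_num [Matrix.one_apply, Matrix.neg_apply, finmk0, finmk1, finmk2, finfact01, finfact02, finfact10, finfact12, finfact20, finfact21] <;>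
        first | omega | (rw [if_neg (by decide)]; omega) | (rw [if_pos (by decide)]; omega)
  · have c3 := hWmem.2
    have c1 := comm (Matrix.diagonal (fun t => if t = (2:Fin 3) then (-1:ℤ) else 1))
      ⟨⟨by rw [show (Matrix.diagonal (fun t => if t = (2:Fin 3) then (-1:ℤ) else 1)).det = -1 from by decide]; exact isUnit_one.neg, by decide⟩, by decide⟩
    have c2 := comm (1 + Matrix.single (1:Fin 3) (2:Fin 3) (2:ℤ))
      ⟨⟨by rw [show (1 + Matrix.single (1:Fin 3) (2:Fin 3) (2:ℤ)).det = 1 from by decide]; exact isUnit_one, by decide⟩, by decide⟩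
    have eA := fun a b => congrFun (congrFun c3 a) b
    have eD := fun a b => congrFun (congrFun c1 a) b
    have eT := fun a b => congrFun (congrFun c2 a) b
    have eS := fun a b => congrFun (congrFun hWsq a) b
    simp only [Matrix.mul_apply, Matrix.add_apply, Matrix.one_apply, Fin.sum_univ_three,
      Matrix.single, Matrix.diagonal, Matrix.of_apply] at eA eD eT eS
    have p1 := eA 0 0; have p2 := eA 2 0; have p3 := eA 1 2; have p4 := eA 1 0
    have p5 := eD 1 2; have p6 := eD 2 0; have p7 := eT 1 2
    have s1 := eS 1 1; have s2 := eS 1 0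
    clear eA eD eT eS c1 c2 c3
    norm_num [finmk0, finmk1, finmk2, finfact01, finfact02, finfact10, finfact12, finfact20, finfact21]
      at p1 p2 p3 p4 p5 p6 p7 s1 s2
    have hzji : W 0 1 = 0 := by omega
    have hzmi : W 2 1 = 0 := by omega
    have hzjm : W 0 2 = 0 := by omega
    have hzim : W 1 2 = 0 := by omega
    have hzmj : W 2 0 = 0 := by omega
    have hjj : W 0 0 = W 1 1 := by omega
    have hmm2 : W 2 2 = W 1 1 := by omega
    have hq : W 1 1 * W 1 1 = 1 := by
      linear_combination s1 - W 1 0 * hzji - W 1 2 * hzmi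
    have hl : W 1 1 = 1 ∨ W 1 1 = -1 := mul_self_eq_one_iff.mp hq
    have hzij : W 1 0 = 0 := by
      have h2 : W 1 1 * W 1 0 + W 1 0 * W 0 0 + W 1 2 * W 2 0 = 0 := by
        linear_combination s2
      rw [hzim, hjj] at h2
      rcases hl with h | h <;> rw [h] at h2 <;> ring_nf at h2 <;> omega
    rcases hl with h | h
    · refine hWne1 ?_
      rw [← Matrix.ext_iff]
      intro a b
      fin_cases a <;> fin_cases b <;>
        norm_num [Matrix.one_apply, finmk0, finmk1, finmk2, finfact01, finfact02, finfact10, finfact12, finfact20, finfact21] <;>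
        first | omega | (rw [if_neg (by decide)]; omega) | (rw [if_pos (by decide)]; omega)
    · refine hWne2 ?_
      rw [← Matrix.ext_iff]
      intro a b
      fin_cases a <;> fin_cases b <;>
        norm_num [Matrix.one_apply, Matrix.neg_apply, finmk0, finmk1, finmk2, finfact01, finfact02, finfact10, finfact12, finfact20, finfact21] <;>
        first | omega | (rw [if_neg (by decide)]; omega) | (rw [if_pos (by decide)]; omega)
  · exact absurd rfl hij
  · have c3 := hWmem.2
    have c1 := comm (Matrix.diagonal (fun t => if t = (0:Fin 3) then (-1:ℤ) else 1))
      ⟨⟨by rw [show (Matrix.diagonal (fun t => if t = (0:Fin 3) then (-1:ℤ) else 1)).det = -1 from by decide]; exact isUnit_one.neg, by decide⟩, by decide⟩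
    have c2 := comm (1 + Matrix.single (1:Fin 3) (0:Fin 3) (2:ℤ))
      ⟨⟨by rw [show (1 + Matrix.single (1:Fin 3) (0:Fin 3) (2:ℤ)).det = 1 from by decide]; exact isUnit_one, by decide⟩, by decide⟩
    have eA := fun a b => congrFun (congrFun c3 a) b
    have eD := fun a b => congrFun (congrFun c1 a) b
    have eT := fun a b => congrFun (congrFun c2 a) b
    have eS := fun a b => congrFun (congrFun hWsq a) b
    simp only [Matrix.mul_apply, Matrix.add_apply, Matrix.one_apply, Fin.sum_univ_three,
      Matrix.single, Matrix.diagonal, Matrix.of_apply] at eA eD eT eS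
    have p1 := eA 2 2; have p2 := eA 0 2; have p3 := eA 1 0; have p4 := eA 1 2
    have p5 := eD 1 0; have p6 := eD 0 2; have p7 := eT 1 0
    have s1 := eS 1 1; have s2 := eS 1 2
    clear eA eD eT eS c1 c2 c3
    norm_num [finmk0, finmk1, finmk2, finfact01, finfact02, finfact10, finfact12, finfact20, finfact21]
      at p1 p2 p3 p4 p5 p6 p7 s1 s2
    have hzji : W 2 1 = 0 := by omega
    have hzmi : W 0 1 = 0 := by omega
    have hzjm : W 2 0 = 0 := by omega
    have hzim : W 1 0 = 0 := by omega
    have hzmj : W 0 2 = 0 := by omega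
    have hjj : W 2 2 = W 1 1 := by omega
    have hmm2 : W 0 0 = W 1 1 := by omega
    have hq : W 1 1 * W 1 1 = 1 := by
      linear_combination s1 - W 1 2 * hzji - W 1 0 * hzmi
    have hl : W 1 1 = 1 ∨ W 1 1 = -1 := mul_self_eq_one_iff.mp hq
    have hzij : W 1 2 = 0 := by
      have h2 : W 1 1 * W 1 2 + W 1 2 * W 2 2 + W 1 0 * W 0 2 = 0 := by
        linear_combination s2
      rw [hzim, hjj] at h2
      rcases hl with h | h <;> rw [h] at h2 <;> ring_nf at h2 <;> omega
    rcases hl with h | h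
    · refine hWne1 ?_
      rw [← Matrix.ext_iff]
      intro a b
      fin_cases a <;> fin_cases b <;>
        norm_num [Matrix.one_apply, finmk0, finmk1, finmk2, finfact01, finfact02, finfact10, finfact12, finfact20, finfact21] <;>
        first | omega | (rw [if_neg (by decide)]; omega) | (rw [if_pos (by decide)]; omega)
    · refine hWne2 ?_
      rw [← Matrix.ext_iff]
      intro a b
      fin_cases a <;> fin_cases b <;>
        norm_num [Matrix.one_apply, Matrix.neg_apply, finmk0, finmk1, finmk2, finfact01, finfact02, finfact10, finfact12, finfact20, finfact21] <;>
        first | omega | (rw [if_neg (by decide)]; omega) | (rw [if_pos (by decide)]; omega)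
  · have c3 := hWmem.2
    have c1 := comm (Matrix.diagonal (fun t => if t = (1:Fin 3) then (-1:ℤ) else 1))
      ⟨⟨by rw [show (Matrix.diagonal (fun t => if t = (1:Fin 3) then (-1:ℤ) else 1)).det = -1 from by decide]; exact isUnit_one.neg, by decide⟩, by decide⟩
    have c2 := comm (1 + Matrix.single (2:Fin 3) (1:Fin 3) (2:ℤ))
      ⟨⟨by rw [show (1 + Matrix.single (2:Fin 3) (1:Fin 3) (2:ℤ)).det = 1 from by decide]; exact isUnit_one, by decide⟩, by decide⟩
    have eA := fun a b => congrFun (congrFun c3 a) b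
    have eD := fun a b => congrFun (congrFun c1 a) b
    have eT := fun a b => congrFun (congrFun c2 a) b
    have eS := fun a b => congrFun (congrFun hWsq a) b
    simp only [Matrix.mul_apply, Matrix.add_apply, Matrix.one_apply, Fin.sum_univ_three,
      Matrix.single, Matrix.diagonal, Matrix.of_apply] at eA eD eT eS
    have p1 := eA 0 0; have p2 := eA 1 0; have p3 := eA 2 1; have p4 := eA 2 0
    have p5 := eD 2 1; have p6 := eD 1 0; have p7 := eT 2 1
    have s1 := eS 2 2; have s2 := eS 2 0
    clear eA eD eT eS c1 c2 c3
    norm_num [finmk0, finmk1, finmk2, finfact01, finfact02, finfact10, finfact12, finfact20, finfact21]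
      at p1 p2 p3 p4 p5 p6 p7 s1 s2
    have hzji : W 0 2 = 0 := by omega
    have hzmi : W 1 2 = 0 := by omega
    have hzjm : W 0 1 = 0 := by omega
    have hzim : W 2 1 = 0 := by omega
    have hzmj : W 1 0 = 0 := by omega
    have hjj : W 0 0 = W 2 2 := by omega
    have hmm2 : W 1 1 = W 2 2 := by omega
    have hq : W 2 2 * W 2 2 = 1 := by
      linear_combination s1 - W 2 0 * hzji - W 2 1 * hzmi
    have hl : W 2 2 = 1 ∨ W 2 2 = -1 := mul_self_eq_one_iff.mp hq
    have hzij : W 2 0 = 0 := by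
      have h2 : W 2 2 * W 2 0 + W 2 0 * W 0 0 + W 2 1 * W 1 0 = 0 := by
        linear_combination s2
      rw [hzim, hjj] at h2
      rcases hl with h | h <;> rw [h] at h2 <;> ring_nf at h2 <;> omega
    rcases hl with h | h
    · refine hWne1 ?_
      rw [← Matrix.ext_iff]
      intro a b
      fin_cases a <;> fin_cases b <;>
        norm_num [Matrix.one_apply, finmk0, finmk1, finmk2, finfact01, finfact02, finfact10, finfact12, finfact20, finfact21] <;>
        first | omega | (rw [if_neg (by decide)]; omega) | (rw [if_pos (by decide)]; omega)
    · refine hWne2 ?_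
      rw [← Matrix.ext_iff]
      intro a b
      fin_cases a <;> fin_cases b <;>
        norm_num [Matrix.one_apply, Matrix.neg_apply, finmk0, finmk1, finmk2, finfact01, finfact02, finfact10, finfact12, finfact20, finfact21] <;>
        first | omega | (rw [if_neg (by decide)]; omega) | (rw [if_pos (by decide)]; omega)
  · have c3 := hWmem.2
    have c1 := comm (Matrix.diagonal (fun t => if t = (0:Fin 3) then (-1:ℤ) else 1))
      ⟨⟨by rw [show (Matrix.diagonal (fun t => if t = (0:Fin 3) then (-1:ℤ) else 1)).det = -1 from by decide]; exact isUnit_one.neg, by decide⟩, by decide⟩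
    have c2 := comm (1 + Matrix.single (2:Fin 3) (0:Fin 3) (2:ℤ))
      ⟨⟨by rw [show (1 + Matrix.single (2:Fin 3) (0:Fin 3) (2:ℤ)).det = 1 from by decide]; exact isUnit_one, by decide⟩, by decide⟩
    have eA := fun a b => congrFun (congrFun c3 a) b
    have eD := fun a b => congrFun (congrFun c1 a) b
    have eT := fun a b => congrFun (congrFun c2 a) b
    have eS := fun a b => congrFun (congrFun hWsq a) b
    simp only [Matrix.mul_apply, Matrix.add_apply, Matrix.one_apply, Fin.sum_univ_three,
      Matrix.single, Matrix.diagonal, Matrix.of_apply] at eA eD eT eS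
    have p1 := eA 1 1; have p2 := eA 0 1; have p3 := eA 2 0; have p4 := eA 2 1
    have p5 := eD 2 0; have p6 := eD 0 1; have p7 := eT 2 0
    have s1 := eS 2 2; have s2 := eS 2 1
    clear eA eD eT eS c1 c2 c3
    norm_num [finmk0, finmk1, finmk2, finfact01, finfact02, finfact10, finfact12, finfact20, finfact21]
      at p1 p2 p3 p4 p5 p6 p7 s1 s2
    have hzji : W 1 2 = 0 := by omega
    have hzmi : W 0 2 = 0 := by omega
    have hzjm : W 1 0 = 0 := by omega
    have hzim : W 2 0 = 0 := by omega
    have hzmj : W 0 1 = 0 := by omega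
    have hjj : W 1 1 = W 2 2 := by omega
    have hmm2 : W 0 0 = W 2 2 := by omega
    have hq : W 2 2 * W 2 2 = 1 := by
      linear_combination s1 - W 2 1 * hzji - W 2 0 * hzmi
    have hl : W 2 2 = 1 ∨ W 2 2 = -1 := mul_self_eq_one_iff.mp hq
    have hzij : W 2 1 = 0 := by
      have h2 : W 2 2 * W 2 1 + W 2 1 * W 1 1 + W 2 0 * W 0 1 = 0 := by
        linear_combination s2
      rw [hzim, hjj] at h2
      rcases hl with h | h <;> rw [h] at h2 <;> ring_nf at h2 <;> omega
    rcases hl with h | h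
    · refine hWne1 ?_
      rw [← Matrix.ext_iff]
      intro a b
      fin_cases a <;> fin_cases b <;>
        norm_num [Matrix.one_apply, finmk0, finmk1, finmk2, finfact01, finfact02, finfact10, finfact12, finfact20, finfact21] <;>
        first | omega | (rw [if_neg (by decide)]; omega) | (rw [if_pos (by decide)]; omega)
    · refine hWne2 ?_
      rw [← Matrix.ext_iff]
      intro a b
      fin_cases a <;> fin_cases b <;>
        norm_num [Matrix.one_apply, Matrix.neg_apply, finmk0, finmk1, finmk2, finfact01, finfact02, finfact10, finfact12, finfact20, finfact21] <;>
        first | omega | (rw [if_neg (by decide)]; omega) | (rw [if_pos (by decide)]; omega)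
  · exact absurd rfl hij

/-- for `i ≠ j` and any `k`, the centralizer of `I + 2E_{ij}` in
`\widehat{GL_3(ℤ)}` is not conjugate in `\widehat{GL_3(ℤ)}` to the centralizer of the
diagonal matrix `D_k` (with `-1` at position `(k,k)` and `1` elsewhere). -/
theorem centralizers_of_Aij_and_sigma_images_not_conjugate
    (i j : Fin 3) (hij : i ≠ j) (k : Fin 3) :
    ¬ ∃ R : Matrix (Fin 3) (Fin 3) ℤ, InGLhat3 R ∧
      (fun X => R * X * R⁻¹) '' ZCent (1 + Matrix.single i j 2)
        = ZCent (Matrix.diagonal fun t => if t = k then (-1 : ℤ) else 1) := by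
  rintro ⟨R, hR, heq⟩
  refine main_aux i j hij _ ?_ ?_ ?_ ?_ R hR heq <;> fin_cases k
  · decide
  · decide
  · decide
  · decide
  · decide
  · decide
  · decide
  · decide
  · decide
  · exact ⟨⟨IsUnit.of_mul_eq_one (-1) (by decide), by decide⟩, rfl⟩
  · exact ⟨⟨IsUnit.of_mul_eq_one (-1) (by decide), by decide⟩, rfl⟩
  · exact ⟨⟨IsUnit.of_mul_eq_one (-1) (by decide), by decide⟩, rfl⟩
end

section
/- The group \widehat{GL_3(ℤ)} has infinitely many z-classes. -/
/-- The subgroup `\widehat{GL_3(ℤ)}` of `GL_3(ℤ)`, as the set of invertible integer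
matrices having exactly 2 even entries in each row. -/
def GLhat3 : Set (Matrix.GeneralLinearGroup (Fin 3) ℤ) :=
  {U | ∀ i, (Finset.univ.filter fun j =>
      Even ((U : Matrix (Fin 3) (Fin 3) ℤ) i j)).card = 2}

/-- `x` and `y` are `z`-equivalent in (the subgroup whose underlying set is) `P`:
the centralizer of `x` in `P` and the centralizer of `y` in `P` are conjugate by an
element of `P`. -/
def ZEquivOn {G : Type*} [Group G] (P : Set G) (x y : G) : Prop :=
  ∃ g ∈ P, (fun h => g * h * g⁻¹) '' {h ∈ P | h * x = x * h} = {h ∈ P | h * y = y * h}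

open Matrix

/-- A family of elements of `\widehat{GL_3(ℤ)}`. -/
noncomputable def xg (t : ℤ) : Matrix.GeneralLinearGroup (Fin 3) ℤ :=
  ⟨!![1, 2*t, 0; 2, 4*t+1, 0; 0, 0, 1], !![4*t+1, -(2*t), 0; -2, 1, 0; 0, 0, 1],
   by ext i j; fin_cases i <;> fin_cases j <;> simp [Matrix.mul_apply, Fin.sum_univ_three] <;> ring,
   by ext i j; fin_cases i <;> fin_cases j <;> simp [Matrix.mul_apply, Fin.sum_univ_three] <;> ring⟩

lemma one_mem_GLhat3 : (1 : Matrix.GeneralLinearGroup (Fin 3) ℤ) ∈ GLhat3 := by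
  intro i
  fin_cases i <;>
  · rw [Finset.card_filter, Fin.sum_univ_three]
    norm_num [Matrix.one_apply, Int.even_iff, Fin.ext_iff]

lemma xg_mem_GLhat3 (t : ℤ) : xg t ∈ GLhat3 := by
  have h4 : ¬ ((2:ℤ) ∣ 4*t+1) := by omega
  intro i
  fin_cases i <;>
  · rw [Finset.card_filter, Fin.sum_univ_three]
    norm_num [xg, Int.even_iff, Int.add_mul_emod_self_left, h4, Int.odd_iff, (by omega : 4*t % 2 = 0), Matrix.cons_val_two, Matrix.vecHead, Matrix.vecTail]

lemma zequiv_refl (x : Matrix.GeneralLinearGroup (Fin 3) ℤ) :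
    ZEquivOn GLhat3 x x := by
  refine ⟨1, one_mem_GLhat3, ?_⟩
  have : (fun h : Matrix.GeneralLinearGroup (Fin 3) ℤ => 1 * h * 1⁻¹) = id := by
    funext h; simp
  rw [this, Set.image_id]

lemma arith (t s a c e d : ℤ) (ht : 1 ≤ t) (hs : 1 ≤ s)
    (hd : d = a*(a+2*t*c) - t*(c*c))
    (hdet : d * e = 1 ∨ d * e = -1)
    (htr : a + (a + 2*t*c) + e = 4*s+3) : t ≤ 2*s + 2 := by
  have hdu : IsUnit d := by
    rcases hdet with h | h
    · exact IsUnit.of_mul_eq_one _ h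
    · exact IsUnit.of_mul_eq_one (a := d) (-e) (by linarith)
  have heu : IsUnit e := by
    rcases hdet with h | h
    · exact IsUnit.of_mul_eq_one (a := e) d (by linarith [mul_comm d e])
    · exact IsUnit.of_mul_eq_one (a := e) (-d) (by linarith [mul_comm d e])
  have hd1 : d = 1 ∨ d = -1 := Int.isUnit_iff.mp hdu
  have he1 : e = 1 ∨ e = -1 := Int.isUnit_iff.mp heu
  have hT2 : (a + (a + 2*t*c))*(a + (a + 2*t*c)) = 4*d + 4*(t*t+t)*(c*c) := by
    rw [hd]; ring
  have hcc : c = 0 ∨ 1 ≤ c*c := by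
    rcases eq_or_ne c 0 with h | h
    · exact Or.inl h
    · right; have := Int.one_le_abs h; nlinarith [abs_mul_abs_self c]
  rcases hcc with h0 | h1
  · subst h0
    rcases hd1 with hd2 | hd2 <;> rcases he1 with he2 | he2 <;> nlinarith
  · have hTub : a + (a + 2*t*c) ≤ 4*s + 4 := by rcases he1 with h | h <;> linarith
    have hTlb : 4*s + 2 ≤ a + (a + 2*t*c) := by rcases he1 with h | h <;> linarith
    have hsq : (a + (a + 2*t*c))*(a + (a + 2*t*c)) ≤ (4*s+4)*(4*s+4) := by nlinarith
    have hge : 4*(t*t+t) - 4 ≤ 4*d + 4*(t*t+t)*(c*c) := by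
      have hnn : 0 ≤ (t*t+t)*(c*c-1) := by
        apply mul_nonneg <;> nlinarith
      rcases hd1 with h | h <;> nlinarith
    by_contra hcon
    push_neg at hcon
    nlinarith

lemma struct (t s : ℤ) (ht : 1 ≤ t) (hs : 1 ≤ s)
    (H : Matrix (Fin 3) (Fin 3) ℤ)
    (hcomm : H * !![1, 2*t, 0; 2, 4*t+1, 0; 0, 0, 1]
           = !![1, 2*t, 0; 2, 4*t+1, 0; 0, 0, 1] * H)
    (hdet : IsUnit H.det)
    (htr : H.trace = 4*s + 3) : t ≤ 2*s + 2 := by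
  have key : ∀ i j, (H * !![1, 2*t, 0; 2, 4*t+1, 0; 0, 0, 1]) i j
      = (!![1, 2*t, 0; 2, 4*t+1, 0; 0, 0, 1] * H) i j := fun i j => by rw [hcomm]
  have e00 := key 0 0; have e01 := key 0 1; have e02 := key 0 2
  have e10 := key 1 0; have e12 := key 1 2
  have e20 := key 2 0; have e21 := key 2 1
  simp [Matrix.mul_apply, Fin.sum_univ_three] at e00 e01 e02 e10 e12 e20 e21
  have h01 : H 0 1 = t * H 1 0 := by linarith
  have h12 : H 1 2 = 0 := e02.resolve_left (by omega)
  have h02 : H 0 2 = 0 := by rw [h12] at e12; linarith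
  have h21 : H 2 1 = 0 := by linarith
  have h20 : H 2 0 = 0 := by
    have : 2*t*(H 2 0) + (4*t)*(H 2 1) = 0 := by linarith
    rw [h21] at this
    have ht0 : (2*t) ≠ 0 := by omega
    simpa [ht0] using mul_eq_zero.mp (by linarith : 2*t*(H 2 0) = 0)
  have h11 : H 1 1 = H 0 0 + 2*t*(H 1 0) := by
    have : 2*t*(H 0 0) + 4*t*(H 0 1) = 2*t*(H 1 1) := by linarith
    have h2 : 2*t*(H 1 1 - (H 0 0 + 2*(H 0 1))) = 0 := by linarith
    have ht0 : (2*t) ≠ 0 := by omega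
    have := mul_eq_zero.mp h2
    rcases this with h|h
    · omega
    · rw [h01] at h; linarith
  have hdetval : H.det = (H 0 0 * (H 0 0 + 2*t*(H 1 0)) - t*(H 1 0 * H 1 0)) * H 2 2 := by
    rw [Matrix.det_fin_three, h01, h12, h02, h21, h20, h11]; ring
  have htrval : H 0 0 + (H 0 0 + 2*t*(H 1 0)) + H 2 2 = 4*s + 3 := by
    rw [Matrix.trace_fin_three] at htr; rw [← h11]; linarith
  have hdet2 := Int.isUnit_iff.mp hdet
  rw [hdetval] at hdet2
  exact arith t s (H 0 0) (H 1 0) (H 2 2) _ ht hs rfl hdet2 htrval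

lemma zkey (t s : ℤ) (ht : 1 ≤ t) (hs : 1 ≤ s)
    (hz : ZEquivOn GLhat3 (xg t) (xg s)) : t ≤ 2*s + 2 := by
  obtain ⟨g, hg, him⟩ := hz
  have hxs : xg s ∈ {h ∈ GLhat3 | h * xg s = xg s * h} := ⟨xg_mem_GLhat3 s, rfl⟩
  rw [← him] at hxs
  obtain ⟨h, ⟨hhP, hhc⟩, hconj⟩ := hxs
  set H : Matrix (Fin 3) (Fin 3) ℤ := (h : Matrix (Fin 3) (Fin 3) ℤ) with hH
  have hcomm : H * !![1, 2*t, 0; 2, 4*t+1, 0; 0, 0, 1]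
      = !![1, 2*t, 0; 2, 4*t+1, 0; 0, 0, 1] * H := by
    exact congrArg Units.val hhc
  have hdet : IsUnit H.det := by
    rw [← Matrix.isUnit_iff_isUnit_det]
    exact h.isUnit
  have htr : H.trace = 4*s + 3 := by
    have hc := congrArg (fun u : Matrix.GeneralLinearGroup (Fin 3) ℤ =>
      Matrix.trace (u : Matrix (Fin 3) (Fin 3) ℤ)) hconj
    simp only [Units.val_mul] at hc
    rw [Matrix.trace_mul_comm ((g : Matrix (Fin 3) (Fin 3) ℤ) * H)] at hc
    rw [← mul_assoc] at hc
    have hginv : ((g⁻¹ : Matrix.GeneralLinearGroup (Fin 3) ℤ) : Matrix (Fin 3) (Fin 3) ℤ)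
        * (g : Matrix (Fin 3) (Fin 3) ℤ) = 1 := by
      exact congrArg Units.val (inv_mul_cancel g)
    rw [hginv, one_mul] at hc
    rw [hc]
    show Matrix.trace !![1, 2*s, 0; 2, 4*s+1, 0; 0, 0, 1] = 4*s+3
    rw [Matrix.trace_fin_three]
    show (1:ℤ) + (4*s+1) + 1 = 4*s+3
    ring
  exact struct t s ht hs H hcomm hdet htr

/-- the group `\widehat{GL_3(ℤ)}` has infinitely many `z`-classes. -/
theorem infinitely_many_z_classes_in_GLhat3 :
    {C : Set (Matrix.GeneralLinearGroup (Fin 3) ℤ) |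
        ∃ x ∈ GLhat3, C = {y ∈ GLhat3 | ZEquivOn GLhat3 x y}}.Infinite := by
  have h1le : ∀ k : ℕ, (1:ℤ) ≤ 5 ^ (k+1) := fun k => one_le_pow₀ (by norm_num : (1:ℤ) ≤ 5)
  apply Set.infinite_of_injective_forall_mem
    (f := fun k : ℕ => {y ∈ GLhat3 | ZEquivOn GLhat3 (xg ((5:ℤ)^(k+1))) y})
  case hf => exact fun k => ⟨xg ((5:ℤ)^(k+1)), xg_mem_GLhat3 _, rfl⟩
  case hi =>
    intro k l hkl
    by_contra hne
    have hkl' : {y | y ∈ GLhat3 ∧ ZEquivOn GLhat3 (xg ((5:ℤ)^(k+1))) y}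
        = {y | y ∈ GLhat3 ∧ ZEquivOn GLhat3 (xg ((5:ℤ)^(l+1))) y} := hkl
    have hmemk : xg ((5:ℤ)^(k+1)) ∈ {y ∈ GLhat3 | ZEquivOn GLhat3 (xg ((5:ℤ)^(l+1))) y} := by
      rw [← hkl']; exact ⟨xg_mem_GLhat3 _, zequiv_refl _⟩
    have hmeml : xg ((5:ℤ)^(l+1)) ∈ {y ∈ GLhat3 | ZEquivOn GLhat3 (xg ((5:ℤ)^(k+1))) y} := by
      rw [hkl']; exact ⟨xg_mem_GLhat3 _, zequiv_refl _⟩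
    have hk2l : (5:ℤ)^(k+1) ≤ 2 * 5^(l+1) + 2 := zkey _ _ (h1le k) (h1le l) hmeml.2
    have hl2k : (5:ℤ)^(l+1) ≤ 2 * 5^(k+1) + 2 := zkey _ _ (h1le l) (h1le k) hmemk.2
    rcases Nat.lt_or_ge k l with h | h
    · have h5 : (5:ℤ)^(k+2) ≤ 5^(l+1) := pow_le_pow_right₀ (by norm_num) (by omega)
      have he : (5:ℤ)^(k+2) = 5 * 5^(k+1) := by ring
      nlinarith [h1le k]
    · have hlk : l < k := by omega
      have h5 : (5:ℤ)^(l+2) ≤ 5^(k+1) := pow_le_pow_right₀ (by norm_num) (by omega)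
      have he : (5:ℤ)^(l+2) = 5 * 5^(l+1) := by ring
      nlinarith [h1le l]
end

section
/- Let b be a nonzero even integer, c an even integer, and n, l, m, t nonzero integers. If the matrices [[1, bn, c],[0, 1, bl],[0, 0, 1]] and [[1, bm, c],[0, 1, bt],[0, 0, 1]] are conjugate by an element of \widehat{GL_3(ℤ)}, then m = n or m = −n, and l = t or l = −t. -/
/-- if `b` is a nonzero even integer, `c` is even, `n, l, m, t` are
nonzero integers, and the matrices `[[1,bn,c],[0,1,bl],[0,0,1]]` and
`[[1,bm,c],[0,1,bt],[0,0,1]]` are conjugate by an element of `\widehat{GL_3(ℤ)}`,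
then `m = ±n` and `l = ±t`. -/
theorem conjugate_upper_unitriangular_parameters
    (b c n l m t : ℤ) (hb : Even b) (hb0 : b ≠ 0) (hc : Even c)
    (hn : n ≠ 0) (hl : l ≠ 0) (hm : m ≠ 0) (ht : t ≠ 0)
    (hconj : ∃ R : Matrix (Fin 3) (Fin 3) ℤ, InGLhat3 R ∧
      R * !![1, b * n, c; 0, 1, b * l; 0, 0, 1] * R⁻¹
        = !![1, b * m, c; 0, 1, b * t; 0, 0, 1]) :
    (m = n ∨ m = -n) ∧ (l = t ∨ l = -t) := by
  obtain ⟨R, ⟨hdet, -⟩, hEq⟩ := hconj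
  have h2 : R * !![1, b * n, c; 0, 1, b * l; 0, 0, 1]
      = !![1, b * m, c; 0, 1, b * t; 0, 0, 1] * R := by
    calc R * !![1, b * n, c; 0, 1, b * l; 0, 0, 1]
        = R * !![1, b * n, c; 0, 1, b * l; 0, 0, 1] * (R⁻¹ * R) := by
          rw [Matrix.nonsing_inv_mul R hdet, mul_one]
      _ = _ := by rw [← mul_assoc, hEq]
  have e21 := congrFun (congrFun h2 2) 1
  have e22 := congrFun (congrFun h2 2) 2
  have e11 := congrFun (congrFun h2 1) 1
  have e12 := congrFun (congrFun h2 1) 2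
  have e01 := congrFun (congrFun h2 0) 1
  simp [Matrix.mul_apply, Fin.sum_univ_three] at e21 e22 e11 e12 e01
  have r20 : R 2 0 = 0 := by rcases e21 with h | h | h <;> simp_all
  rw [r20] at e22
  have r21 : R 2 1 = 0 := by
    have : R 2 1 * b = 0 ∨ l = 0 := mul_eq_zero.mp (by linarith)
    rcases this with h | h
    · rcases mul_eq_zero.mp h with h | h
      · exact h
      · exact absurd h hb0
    · exact absurd h hl
  rw [r21] at e11 e01
  have r10 : R 1 0 = 0 := by
    have : R 1 0 * b = 0 ∨ n = 0 := mul_eq_zero.mp (by linarith)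
    rcases this with h | h
    · rcases mul_eq_zero.mp h with h | h
      · exact h
      · exact absurd h hb0
    · exact absurd h hn
  rw [r10] at e12
  have hdet' : IsUnit (R 0 0 * (R 1 1 * R 2 2)) := by
    have hd : R.det = R 0 0 * (R 1 1 * R 2 2) := by
      rw [Matrix.det_fin_three, r20, r21, r10]; ring
    rwa [hd] at hdet
  have u0 := isUnit_of_mul_isUnit_left hdet'
  have u12 := isUnit_of_mul_isUnit_right hdet'
  have u1 := isUnit_of_mul_isUnit_left u12
  have u2 := isUnit_of_mul_isUnit_right u12
  have en : n * R 0 0 = m * R 1 1 := by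
    have hb' : b * (n * R 0 0) = b * (m * R 1 1) := by linarith
    exact mul_left_cancel₀ hb0 hb'
  have el : l * R 1 1 = t * R 2 2 := by
    have hb' : b * (l * R 1 1) = b * (t * R 2 2) := by linarith
    exact mul_left_cancel₀ hb0 hb'
  rcases Int.isUnit_iff.mp u0 with h0 | h0 <;>
    rcases Int.isUnit_iff.mp u1 with h1 | h1 <;>
      rcases Int.isUnit_iff.mp u2 with h3 | h3 <;>
        rw [h0, h1] at en <;> rw [h1, h3] at el <;>
          exact ⟨by omega, by omega⟩
end

section
/- There is no matrix R ∈ \widehat{GL_3(ℤ)} satisfying R·A = B·R, where A = [[1, 2, 2],[0, 3, 4],[0, 2, 3]] and B = [[1, 0, 0],[0, 3, 4],[0, 2, 3]]; in fact, every integer matrix R with R·A = B·R has the form [[a, 0, −a],[0, x, y],[0, z, w]] for some integers a, x, y, z, w. -/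
lemma form_aux (R : Matrix (Fin 3) (Fin 3) ℤ)
    (hR : R * !![1, 2, 2; 0, 3, 4; 0, 2, 3] = !![1, 0, 0; 0, 3, 4; 0, 2, 3] * R) :
    ∃ a x y z w : ℤ, R = !![a, 0, -a; 0, x, y; 0, z, w] := by
  have h := Matrix.ext_iff.2 hR
  have h01 := h 0 1
  have h02 := h 0 2
  have h10 := h 1 0
  have h20 := h 2 0
  simp [Matrix.mul_apply, Fin.sum_univ_three, Matrix.vecHead, Matrix.vecTail] at h01 h02 h10 h20
  refine ⟨R 0 0, R 1 1, R 1 2, R 2 1, R 2 2, ?_⟩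
  ext i j
  fin_cases i <;> fin_cases j <;> simp [Matrix.vecHead, Matrix.vecTail] <;> omega

/-- with `A = [[1,2,2],[0,3,4],[0,2,3]]` and
`B = [[1,0,0],[0,3,4],[0,2,3]]`, no matrix `R ∈ \widehat{GL_3(ℤ)}` satisfies
`R·A = B·R`; in fact every integer matrix `R` with `R·A = B·R` has the form
`[[a,0,-a],[0,x,y],[0,z,w]]`. -/
theorem no_palindromic_conjugator_example :
    (¬ ∃ R : Matrix (Fin 3) (Fin 3) ℤ, InGLhat3 R ∧
        R * !![1, 2, 2; 0, 3, 4; 0, 2, 3] = !![1, 0, 0; 0, 3, 4; 0, 2, 3] * R) ∧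
    ∀ R : Matrix (Fin 3) (Fin 3) ℤ,
      R * !![1, 2, 2; 0, 3, 4; 0, 2, 3] = !![1, 0, 0; 0, 3, 4; 0, 2, 3] * R →
        ∃ a x y z w : ℤ, R = !![a, 0, -a; 0, x, y; 0, z, w] := by
  constructor
  · rintro ⟨R, ⟨-, hcard⟩, hR⟩
    obtain ⟨a, x, y, z, w, rfl⟩ := form_aux R hR
    have h0 := hcard 0
    rcases Int.even_or_odd a with ha | ha
    · have : (Finset.univ.filter fun j =>
          Even (!![a, 0, -a; 0, x, y; 0, z, w] 0 j)).card = 3 := by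
        rw [Finset.filter_true_of_mem (fun j _ => by
          fin_cases j <;> simp [ha, ha.neg])]
        decide
      omega
    · have : (Finset.univ.filter fun j =>
          Even (!![a, 0, -a; 0, x, y; 0, z, w] 0 j)).card = 1 := by
        rw [show (Finset.univ.filter fun j =>
            Even (!![a, 0, -a; 0, x, y; 0, z, w] 0 j)) = {1} from ?_]
        · rfl
        ext j
        fin_cases j <;>
          simp [Int.not_even_iff_odd, ha, (by simpa using ha.neg : Odd (-a))]
      omega
  · exact form_aux
end
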